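/- arXiv:2102.08342 — 6 statements merged into one kernel-verified Lean document; each statement's English description precedes it below -/
import Mathlib

section
/- Let G = (V,E) be a graph with maximum degree at most Δ. For any vertex v ∈ V and any integer ℓ ≥ 2, the number of 2-trees in G which contain v and have size exactly ℓ is at most (e·Δ²)^{ℓ−1}/2. -/
/-! Every 2-tree induces a connected subgraph of `G.distLeTwo`, the graph joining distinct vertices
at distance at most 2, whose maximum degree is at most `Δ²`. So it suffices to count connected sets
`T ∋ v` of size `k + 1` in a graph of maximum degree `d`. Explore `T` from `v`, numbering the
neighbour slots of the `j`-th explored vertex `j * d, …, j * d + d - 1`, and always add the vertex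
behind the smallest slot leading to a new vertex of `T`. The `k` slots used increase strictly, lie
below `k * d`, and `T` can be rebuilt from them, so there are at most `(k * d).choose k` such sets.
Finally `(k * d).choose k ≤ (k * d) ^ k / k! ≤ (e * d) ^ k / 2` by Stirling's bound
`k! ≥ √(2πk) (k / e) ^ k`. -/

open Finset

/-- The auxiliary graph of a set `T` of vertices of `G`: two distinct vertices of `T` are
joined whenever they are at distance at most 2 in `G` (i.e. adjacent or having a common
neighbour). -/
def auxTwoGraph {V : Type*} (G : SimpleGraph V) (T : Finset V) : SimpleGraph T where
  Adj a b := a ≠ b ∧ (G.Adj a b ∨ ∃ w : V, G.Adj a w ∧ G.Adj w b)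
  symm := by
    refine ⟨?_⟩
    rintro a b ⟨hab, h⟩
    refine ⟨hab.symm, ?_⟩
    rcases h with h | ⟨w, h1, h2⟩
    · exact Or.inl h.symm
    · exact Or.inr ⟨w, h2.symm, h1.symm⟩
  loopless := by refine ⟨?_⟩; rintro a ⟨h, -⟩; exact h rfl

/-- `T` is a 2-tree of `G`: distinct vertices of `T` are at distance ≥ 2 in `G`
(equivalently, `T` is an independent set of `G`), and the auxiliary graph on `T` joining
vertices at distance ≤ 2 is connected. -/
def IsTwoTree {V : Type*} (G : SimpleGraph V) (T : Finset V) : Prop :=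
  (∀ u ∈ T, ∀ v ∈ T, u ≠ v → ¬ G.Adj u v) ∧ (auxTwoGraph G T).Connected

namespace SimpleGraph

noncomputable section Exploration

variable {V : Type*} (H : SimpleGraph V) [LocallyFinite H]

def nbrAt (u : V) (j : ℕ) : V := (H.neighborFinset u).toList.getD j u

variable {H} in
theorem exists_lt_degree_nbrAt_eq {u w : V} (h : H.Adj u w) :
    ∃ j < H.degree u, H.nbrAt u j = w := by
  obtain ⟨j, hj, rfl⟩ :=
    List.getElem_of_mem (l := (H.neighborFinset u).toList) (by simpa using h)
  exact ⟨j, by simpa using hj, List.getD_eq_getElem _ _ hj⟩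

variable (d : ℕ) (v : V)

def slotTarget (l : List V) (m : ℕ) : V := H.nbrAt (l.getD (m / d) v) (m % d)

def appendSlotTarget (l : List V) (m : ℕ) : List V := l ++ [H.slotTarget d v l m]

def decodeSlots (ms : List ℕ) : List V := ms.foldl (H.appendSlotTarget d v) [v]

variable {H d v} in
theorem slotTarget_append {l : List V} {m : ℕ} (hm : m < l.length * d) (l' : List V) :
    H.slotTarget d v (l ++ l') m = H.slotTarget d v l m := by
  rw [slotTarget, slotTarget, List.getD_append _ _ _ _ (Nat.div_lt_of_lt_mul (by linarith))]

variable [DecidableEq V] (T : Finset V)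

def openSlots (l : List V) : Finset ℕ :=
  {m ∈ range (l.length * d) | H.slotTarget d v l m ∈ T ∧ H.slotTarget d v l m ∉ l}

/-- This is `0` when there is no open slot. -/
def firstOpenSlot (l : List V) : ℕ := sInf (H.openSlots d v T l : Set ℕ)

def explore (n : ℕ) : List V :=
  (fun l => H.appendSlotTarget d v l (H.firstOpenSlot d v T l))^[n] [v]

def exploreKey (n : ℕ) : ℕ := H.firstOpenSlot d v T (H.explore d v T n)

def exploreCode (k : ℕ) : Finset ℕ := ((List.range k).map (H.exploreKey d v T)).toFinset

variable {H d v T}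

theorem explore_succ (n : ℕ) :
    H.explore d v T (n + 1) = H.appendSlotTarget d v (H.explore d v T n) (H.exploreKey d v T n) :=
  Function.iterate_succ_apply' _ _ _

theorem length_explore (n : ℕ) : (H.explore d v T n).length = n + 1 := by
  induction n with
  | zero => rfl
  | succ n ih => simp [explore_succ, appendSlotTarget, ih]

theorem explore_eq_decodeSlots (n : ℕ) :
    H.explore d v T n = H.decodeSlots d v ((List.range n).map (H.exploreKey d v T)) := by
  induction n with
  | zero => rfl
  | succ n ih =>
    rw [explore_succ, List.range_succ, List.map_append, decodeSlots, List.foldl_append,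
      ← decodeSlots, ← ih]
    rfl

theorem explore_ne_nil (n : ℕ) : H.explore d v T n ≠ [] :=
  List.ne_nil_of_length_pos (by simp [length_explore])

theorem firstOpenSlot_mem {l : List V} (h : (H.openSlots d v T l).Nonempty) :
    H.firstOpenSlot d v T l ∈ H.openSlots d v T l :=
  Nat.sInf_mem h

theorem openSlots_nonempty (hd : ∀ u, H.degree u ≤ d) (hT : (H.induce (T : Set V)).Connected)
    {l : List V} (hne : l ≠ []) (hlT : l.toFinset ⊆ T) (hlen : l.length < T.card) :
    (H.openSlots d v T l).Nonempty := by
  obtain ⟨a, ha⟩ := List.exists_mem_of_ne_nil l hne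
  obtain ⟨u, huT, hul⟩ := exists_mem_notMem_of_card_lt_card (l.toFinset_card_le.trans_lt hlen)
  have haT : a ∈ T := hlT (List.mem_toFinset.2 ha)
  obtain ⟨e, -, hx, hy⟩ := (hT.preconnected ⟨a, haT⟩ ⟨u, huT⟩).some.exists_boundary_dart
    {x | x.1 ∈ l} ha (by simpa using hul)
  obtain ⟨i, hi, hix⟩ := List.getElem_of_mem (hx : (e.fst : V) ∈ l)
  obtain ⟨j, hj, hjy⟩ :=
    exists_lt_degree_nbrAt_eq (H := H) (u := e.fst) (w := e.snd) e.adj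
  have hjd : j < d := hj.trans_le (hd _)
  have htarget : H.slotTarget d v l (d * i + j) = e.snd := by
    rw [slotTarget, Nat.mul_add_div (by omega), Nat.div_eq_of_lt hjd, Nat.add_zero,
      Nat.mul_add_mod, Nat.mod_eq_of_lt hjd, List.getD_eq_getElem _ _ hi, hix, hjy]
  refine ⟨d * i + j, mem_filter.2 ⟨mem_range.2 ?_, ?_⟩⟩
  · nlinarith
  · rw [htarget]
    exact ⟨e.snd.2, hy⟩

theorem firstOpenSlot_lt_of_mem_openSlots_append {l : List V}
    (h : (H.openSlots d v T l).Nonempty) {m : ℕ}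
    (hm : m ∈ H.openSlots d v T (H.appendSlotTarget d v l (H.firstOpenSlot d v T l))) :
    H.firstOpenSlot d v T l < m := by
  have hfirst := mem_filter.1 (firstOpenSlot_mem h)
  rw [appendSlotTarget, openSlots, mem_filter, List.mem_append, List.mem_singleton] at hm
  obtain ⟨-, hmT, hml⟩ := hm
  push Not at hml
  by_cases hlt : m < l.length * d
  · rw [slotTarget_append hlt] at hmT hml
    have hmem : m ∈ H.openSlots d v T l := mem_filter.2 ⟨mem_range.2 hlt, hmT, hml.1⟩
    exact (Nat.sInf_le hmem).lt_of_ne fun heq => hml.2 (congrArg _ heq.symm)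
  · exact (mem_range.1 hfirst.1).trans_le (not_lt.1 hlt)

section Connected

variable (hd : ∀ u, H.degree u ≤ d) (hT : (H.induce (T : Set V)).Connected) (hv : v ∈ T)
  {k : ℕ} (hcard : T.card = k + 1)
include hd hT hv hcard

theorem nodup_explore_and_toFinset_subset {n : ℕ} (hn : n ≤ k) :
    (H.explore d v T n).Nodup ∧ (H.explore d v T n).toFinset ⊆ T := by
  induction n with
  | zero => exact ⟨List.nodup_singleton v, by simpa [explore] using hv⟩
  | succ n ih =>
    obtain ⟨hnd, hsub⟩ := ih (by omega)
    have hopen : (H.openSlots d v T (H.explore d v T n)).Nonempty :=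
      openSlots_nonempty hd hT (explore_ne_nil n) hsub (by rw [length_explore, hcard]; omega)
    obtain ⟨-, hnew, hfresh⟩ := mem_filter.1 (firstOpenSlot_mem hopen)
    rw [explore_succ, appendSlotTarget, List.toFinset_append, ← List.concat_eq_append,
      List.nodup_concat]
    exact ⟨⟨hfresh, hnd⟩, union_subset hsub (singleton_subset_iff.2 hnew)⟩

theorem openSlots_explore_nonempty {n : ℕ} (hn : n < k) :
    (H.openSlots d v T (H.explore d v T n)).Nonempty :=
  openSlots_nonempty hd hT (explore_ne_nil n)
    (nodup_explore_and_toFinset_subset hd hT hv hcard hn.le).2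
    (by rw [length_explore, hcard]; omega)

theorem exploreKey_lt {n : ℕ} (hn : n < k) : H.exploreKey d v T n < k * d := by
  have hopen := openSlots_explore_nonempty hd hT hv hcard hn
  have := mem_range.1 (mem_filter.1 (firstOpenSlot_mem hopen)).1
  rw [length_explore] at this
  exact this.trans_le (Nat.mul_le_mul_right d hn)

theorem pairwise_lt_map_exploreKey :
    ((List.range k).map (H.exploreKey d v T)).Pairwise (· < ·) := by
  have hmono : StrictMonoOn (H.exploreKey d v T) (Set.Iic (k - 1)) :=
    strictMonoOn_Iic_of_lt_succ fun n hn => by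
      rw [Order.succ_eq_add_one]
      refine firstOpenSlot_lt_of_mem_openSlots_append
        (openSlots_explore_nonempty hd hT hv hcard (by omega)) ?_
      have : H.exploreKey d v T (n + 1) ∈ H.openSlots d v T (H.explore d v T (n + 1)) :=
        firstOpenSlot_mem (openSlots_explore_nonempty hd hT hv hcard (by omega))
      rwa [explore_succ] at this
  refine List.pairwise_map.2 (List.pairwise_lt_range.imp_of_mem fun ha hb hab => hmono ?_ ?_ hab)
  · simp at ha ⊢; omega
  · simp at hb ⊢; omega

theorem exploreCode_mem_powersetCard :
    H.exploreCode d v T k ∈ (range (k * d)).powersetCard k := by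
  have hnd := (pairwise_lt_map_exploreKey hd hT hv hcard).nodup
  refine mem_powersetCard.2
    ⟨fun m hm => ?_, by simp [exploreCode, List.toFinset_card_of_nodup hnd]⟩
  obtain ⟨n, hn, rfl⟩ := by simpa [exploreCode] using hm
  exact mem_range.2 (exploreKey_lt hd hT hv hcard hn)

theorem toFinset_decodeSlots_sort_exploreCode :
    (H.decodeSlots d v (H.exploreCode d v T k).sort).toFinset = T := by
  have hsorted := pairwise_lt_map_exploreKey hd hT hv hcard
  rw [exploreCode, (List.toFinset_sort _ hsorted.nodup).2 (hsorted.imp le_of_lt),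
    ← explore_eq_decodeSlots]
  obtain ⟨hnd, hsub⟩ := nodup_explore_and_toFinset_subset hd hT hv hcard le_rfl
  exact eq_of_subset_of_card_le hsub
    (by rw [List.toFinset_card_of_nodup hnd, length_explore, hcard])

end Connected

variable (v) in
theorem ncard_setOf_connected_induce_le_choose (hd : ∀ u, H.degree u ≤ d) (k : ℕ) :
    {T : Finset V | v ∈ T ∧ T.card = k + 1 ∧ (H.induce (T : Set V)).Connected}.ncard ≤
      (k * d).choose k := by
  calc _ ≤ ((range (k * d)).powersetCard k : Set (Finset ℕ)).ncard :=
        Set.ncard_le_ncard_of_injOn (H.exploreCode d v · k)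
          (fun _ h => exploreCode_mem_powersetCard hd h.2.2 h.1 h.2.1)
          (Set.LeftInvOn.injOn (f₁' := fun c => (H.decodeSlots d v c.sort).toFinset)
            fun _ h => toFinset_decodeSlots_sort_exploreCode hd h.2.2 h.1 h.2.1)
          (finite_toSet _)
    _ = (k * d).choose k := by rw [Set.ncard_coe_finset, card_powersetCard, card_range]

end Exploration

variable {V : Type*}

def distLeTwo (G : SimpleGraph V) : SimpleGraph V where
  Adj a b := a ≠ b ∧ (G.Adj a b ∨ ∃ w, G.Adj a w ∧ G.Adj w b)
  symm := ⟨fun _ _ ⟨hne, h⟩ =>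
    ⟨hne.symm, h.imp Adj.symm fun ⟨w, h₁, h₂⟩ => ⟨w, h₂.symm, h₁.symm⟩⟩⟩
  loopless := ⟨fun _ h => h.1 rfl⟩

theorem degree_distLeTwo_le [DecidableEq V] {G : SimpleGraph V} [LocallyFinite G]
    [LocallyFinite G.distLeTwo] {Δ : ℕ} (hΔ : ∀ u, G.degree u ≤ Δ) (u : V) :
    G.distLeTwo.degree u ≤ Δ ^ 2 := by
  have hsub : G.distLeTwo.neighborFinset u ⊆
      (G.neighborFinset u).biUnion fun w => insert w ((G.neighborFinset w).erase u) := by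
    intro b hb
    simp only [mem_neighborFinset] at hb
    obtain ⟨hne, hub | ⟨w, huw, hwb⟩⟩ := hb
    · exact mem_biUnion.2 ⟨b, by simpa using hub, mem_insert_self _ _⟩
    · exact mem_biUnion.2 ⟨w, by simpa using huw,
        mem_insert_of_mem (mem_erase.2 ⟨hne.symm, by simpa using hwb⟩)⟩
  have hterm : ∀ w ∈ G.neighborFinset u,
      (insert w ((G.neighborFinset w).erase u)).card ≤ Δ := by
    intro w hw
    have hu : u ∈ G.neighborFinset w := by simpa [adj_comm] using hw
    have := card_erase_add_one hu
    have := card_insert_le w ((G.neighborFinset w).erase u)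
    have := hΔ w
    rw [← card_neighborFinset_eq_degree] at *
    omega
  calc G.distLeTwo.degree u ≤ (G.neighborFinset u).card * Δ :=
        (card_le_card hsub).trans (card_biUnion_le_card_mul _ _ _ hterm)
    _ ≤ Δ * Δ := Nat.mul_le_mul_right _ ((card_neighborFinset_eq_degree G u).trans_le (hΔ u))
    _ = Δ ^ 2 := (sq Δ).symm

theorem _root_.IsTwoTree.connected_induce_distLeTwo {G : SimpleGraph V} {T : Finset V}
    (hT : IsTwoTree G T) : (G.distLeTwo.induce (T : Set V)).Connected :=
  hT.2.mono fun (a b : T) (h : (auxTwoGraph G T).Adj a b) =>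
    (⟨Subtype.coe_ne_coe.2 h.1, h.2⟩ : G.distLeTwo.Adj a b)

end SimpleGraph

open Nat Real in
theorem Nat.choose_mul_le_exp_mul_pow_div_two (d k : ℕ) (hk : 1 ≤ k) :
    ((k * d).choose k : ℝ) ≤ (exp 1 * d) ^ k / 2 := by
  have hk' : (1 : ℝ) ≤ k := by exact_mod_cast hk
  have h2 : 2 ≤ √(2 * π * k) :=
    le_sqrt_of_sq_le (by nlinarith [pi_gt_three])
  have hfact : 2 * (k / exp 1) ^ k ≤ k ! :=
    (mul_le_mul_of_nonneg_right h2 (by positivity)).trans (Stirling.le_factorial_stirling k)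
  calc ((k * d).choose k : ℝ) ≤ ((k * d : ℕ) : ℝ) ^ k / k ! := choose_le_pow_div k (k * d)
    _ ≤ ((k * d : ℕ) : ℝ) ^ k / (2 * (k / exp 1) ^ k) :=
        div_le_div_of_nonneg_left (by positivity) (by positivity) hfact
    _ = (exp 1 * d) ^ k / 2 := by
        have : (k : ℝ) ≠ 0 := by positivity
        rw [Nat.cast_mul, mul_pow, div_pow, mul_pow]
        field_simp

theorem stmt_2_general {V : Type*} [Fintype V] (G : SimpleGraph V)
    [DecidableRel G.Adj] (Δ : ℕ) (hΔ : ∀ u, G.degree u ≤ Δ)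
    (v : V) (ℓ : ℕ) (hℓ : 2 ≤ ℓ) :
    ((Set.ncard {T : Finset V | v ∈ T ∧ T.card = ℓ ∧ IsTwoTree G T} : ℝ)) ≤
      (Real.exp 1 * (Δ : ℝ) ^ 2) ^ (ℓ - 1) / 2 := by
  classical
  obtain ⟨k, rfl⟩ : ∃ k, ℓ = k + 1 := ⟨ℓ - 1, by omega⟩
  have hsub : {T : Finset V | v ∈ T ∧ T.card = k + 1 ∧ IsTwoTree G T} ⊆
      {T | v ∈ T ∧ T.card = k + 1 ∧ (G.distLeTwo.induce (T : Set V)).Connected} :=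
    fun _ h => ⟨h.1, h.2.1, IsTwoTree.connected_induce_distLeTwo h.2.2⟩
  have hcount := (Set.ncard_le_ncard hsub (Set.toFinite _)).trans
    (G.distLeTwo.ncard_setOf_connected_induce_le_choose v (G.degree_distLeTwo_le hΔ) k)
  calc _ ≤ ((k * Δ ^ 2).choose k : ℝ) := mod_cast hcount
    _ ≤ (Real.exp 1 * ((Δ ^ 2 : ℕ) : ℝ)) ^ k / 2 :=
        Nat.choose_mul_le_exp_mul_pow_div_two _ k (by omega)
    _ = _ := by push_cast; rfl

/-- **Counting 2-trees.** In a graph `G` of maximum degree at most `Δ`, for any vertex `v` and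
any integer `ℓ ≥ 2`, the number of 2-trees of `G` containing `v` of size exactly `ℓ` is at most
`(e·Δ²)^{ℓ-1}/2`. -/
theorem stmt_2 {V : Type*} [Fintype V] [DecidableEq V] (G : SimpleGraph V)
    [DecidableRel G.Adj] (Δ : ℕ) (hΔ : ∀ u, G.degree u ≤ Δ)
    (v : V) (ℓ : ℕ) (hℓ : 2 ≤ ℓ) :
    ((Set.ncard {T : Finset V | v ∈ T ∧ T.card = ℓ ∧ IsTwoTree G T} : ℝ)) ≤
      (Real.exp 1 * (Δ : ℝ) ^ 2) ^ (ℓ - 1) / 2 :=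
  stmt_2_general G Δ hΔ v ℓ hℓ
end

section
/- Let G = (V,E) be a graph with maximum degree at most Δ, let H be a connected subgraph of G with vertex set V(H), and let v ∈ V(H). Then there exists a 2-tree T of G with v ∈ T ⊆ V(H) and |T| ≥ |V(H)|/(Δ+1). -/
open Finset

/-!
Take a 2-tree `T ⊆ V(H)` containing `v` of maximum size. Its closed neighbourhood `N[T]` covers
`V(H)`: otherwise, as `H` is connected, some edge `pq` of `H` leaves `N[T]`, with `p ∉ N[T]`
and `q ∈ N[T]`; then `p` is not adjacent to `T` but within distance 2 of it, so `T ∪ {p}` is a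
larger 2-tree. Since `|N[T]| ≤ |T| (Δ + 1)`, the bound follows.
-/

open SimpleGraph

section

variable {V : Type*} {G : SimpleGraph V}

section ClosedNeighborFinset

variable (G) in
def closedNeighborFinset [DecidableEq V] [G.LocallyFinite] (T : Finset V) : Finset V :=
  T.biUnion fun t => insert t (G.neighborFinset t)

variable [DecidableEq V] [G.LocallyFinite] {T : Finset V} {x : V}

lemma mem_closedNeighborFinset :
    x ∈ closedNeighborFinset G T ↔ ∃ t ∈ T, x = t ∨ G.Adj t x := by
  simp [closedNeighborFinset]

lemma subset_closedNeighborFinset : T ⊆ closedNeighborFinset G T :=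
  fun t ht => mem_closedNeighborFinset.2 ⟨t, ht, .inl rfl⟩

lemma card_closedNeighborFinset_le {Δ : ℕ} (hΔ : ∀ t ∈ T, G.degree t ≤ Δ) :
    (closedNeighborFinset G T).card ≤ T.card * (Δ + 1) :=
  calc (closedNeighborFinset G T).card
      ≤ ∑ t ∈ T, (insert t (G.neighborFinset t)).card := card_biUnion_le
    _ ≤ ∑ _t ∈ T, (Δ + 1) := sum_le_sum fun t ht => (card_insert_le _ _).trans <| by
        rw [card_neighborFinset_eq_degree]
        exact Nat.succ_le_succ (hΔ t ht)
    _ = T.card * (Δ + 1) := by rw [sum_const, smul_eq_mul]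

end ClosedNeighborFinset

lemma SimpleGraph.Subgraph.Connected.exists_adj_mem_notMem {H : G.Subgraph} (hH : H.Connected)
    {S : Set V} {a b : V} (ha : a ∈ H.verts) (hb : b ∈ H.verts) (haS : a ∈ S) (hbS : b ∉ S) :
    ∃ p q, H.Adj p q ∧ p ∈ S ∧ q ∉ S := by
  obtain ⟨w⟩ := hH.preconnected ⟨a, ha⟩ ⟨b, hb⟩
  obtain ⟨d, -, hd₁, hd₂⟩ := w.exists_boundary_dart (Subtype.val ⁻¹' S) haS hbS
  exact ⟨_, _, d.adj, hd₁, hd₂⟩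

lemma auxTwoGraph_connected_insert [DecidableEq V] {T : Finset V}
    (hT : (auxTwoGraph G T).Connected) {y t : V} (hy : y ∉ T) (ht : t ∈ T)
    (hyt : G.Adj y t ∨ ∃ w, G.Adj y w ∧ G.Adj w t) :
    (auxTwoGraph G (insert y T)).Connected := by
  let f : auxTwoGraph G T →g auxTwoGraph G (insert y T) :=
    { toFun a := ⟨a, mem_insert_of_mem a.2⟩
      map_rel' {a b} := fun ⟨hne, h⟩ =>
        ⟨fun h' => hne (Subtype.ext (congrArg Subtype.val h' :)), h⟩ }
  let Y : (insert y T : Finset V) := ⟨y, mem_insert_self y T⟩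
  have hY : (auxTwoGraph G (insert y T)).Adj Y (f ⟨t, ht⟩) :=
    ⟨fun h => hy (by simp_all [Y, f, Subtype.ext_iff]), hyt⟩
  refine (connected_iff_exists_forall_reachable _).2 ⟨Y, fun ⟨b, hb⟩ => ?_⟩
  rcases mem_insert.1 hb with rfl | hb
  · rfl
  · exact hY.reachable.trans ((hT.preconnected ⟨t, ht⟩ ⟨b, hb⟩).map f)

lemma isTwoTree_singleton (v : V) : IsTwoTree G {v} :=
  ⟨fun a ha b hb hab => (hab (by simp_all)).elim, .of_subsingleton⟩

lemma IsTwoTree.insert [DecidableEq V] [G.LocallyFinite] {T : Finset V} (hT : IsTwoTree G T)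
    {p q : V} (hpq : G.Adj p q) (hp : p ∉ closedNeighborFinset G T)
    (hq : q ∈ closedNeighborFinset G T) : IsTwoTree G (insert p T) := by
  have hpT : p ∉ T := fun h => hp (subset_closedNeighborFinset h)
  have hpT' : ∀ t ∈ T, ¬ G.Adj t p := fun t ht h =>
    hp (mem_closedNeighborFinset.2 ⟨t, ht, .inr h⟩)
  obtain ⟨t, ht, hqt⟩ := mem_closedNeighborFinset.1 hq
  refine ⟨fun a ha b hb hab => ?_, auxTwoGraph_connected_insert hT.2 hpT ht ?_⟩
  · rcases mem_insert.1 ha with rfl | ha' <;> rcases mem_insert.1 hb with rfl | hb'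
    · exact (hab rfl).elim
    · exact fun h => hpT' b hb' h.symm
    · exact hpT' a ha'
    · exact hT.1 a ha' b hb' hab
  · rcases hqt with rfl | hqt
    · exact .inl hpq
    · exact .inr ⟨q, hpq, hqt.symm⟩

end

theorem stmt_3_general {V : Type*} [Fintype V] (G : SimpleGraph V)
    [DecidableRel G.Adj] (Δ : ℕ) (hΔ : ∀ u, G.degree u ≤ Δ)
    (H : G.Subgraph) (hH : H.Connected) (v : V) (hv : v ∈ H.verts) :
    ∃ T : Finset V, v ∈ T ∧ ↑T ⊆ H.verts ∧ IsTwoTree G T ∧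
      (H.verts.ncard : ℝ) / ((Δ : ℝ) + 1) ≤ (T.card : ℝ) := by
  classical
  obtain ⟨T, hT, hTmax⟩ :=
    (univ.filter fun T : Finset V => v ∈ T ∧ ↑T ⊆ H.verts ∧ IsTwoTree G T).exists_max_image
      card ⟨{v}, by simp [hv, isTwoTree_singleton]⟩
  simp only [mem_filter, mem_univ, true_and] at hT hTmax
  obtain ⟨hvT, hTH, hTtree⟩ := hT
  have hcover : H.verts ⊆ closedNeighborFinset G T := by
    intro u hu
    by_contra huT
    obtain ⟨q, p, hqp, hq, hp⟩ :=
      hH.exists_adj_mem_notMem hv hu (subset_closedNeighborFinset hvT) huT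
    have hpT : p ∉ T := fun h => hp (subset_closedNeighborFinset h)
    have hmax := hTmax (insert p T) ⟨mem_insert_of_mem hvT,
      by simpa [Set.insert_subset_iff] using ⟨H.edge_vert hqp.symm, hTH⟩,
      hTtree.insert (G.adj_symm (H.adj_sub hqp)) hp hq⟩
    rw [card_insert_of_notMem hpT] at hmax
    omega
  have hcard : H.verts.ncard ≤ T.card * (Δ + 1) := by
    refine (Set.ncard_le_ncard hcover).trans ?_
    rw [Set.ncard_coe_finset]
    exact card_closedNeighborFinset_le fun t _ => hΔ t
  refine ⟨T, hvT, hTH, hTtree, ?_⟩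
  rw [div_le_iff₀ (by positivity)]
  exact_mod_cast hcard

/-- **Existence of large 2-trees.** If `G` has maximum degree at most `Δ`, `H` is a connected
subgraph of `G` and `v` is a vertex of `H`, then there is a 2-tree `T` of `G` with
`v ∈ T ⊆ V(H)` and `|T| ≥ |V(H)|/(Δ+1)`. -/
theorem stmt_3 {V : Type*} [Fintype V] [DecidableEq V] (G : SimpleGraph V)
    [DecidableRel G.Adj] (Δ : ℕ) (hΔ : ∀ u, G.degree u ≤ Δ)
    (H : G.Subgraph) (hH : H.Connected) (v : V) (hv : v ∈ H.verts) :
    ∃ T : Finset V, v ∈ T ∧ ↑T ⊆ H.verts ∧ IsTwoTree G T ∧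
      (H.verts.ncard : ℝ) / ((Δ : ℝ) + 1) ≤ (T.card : ℝ) :=
  stmt_3_general G Δ hΔ H hH v hv
end

section
/- Let Φ be an atomic CSP with degree Δ, let η ∈ (0,1/2), and let π be a projection scheme with b ≤ η/(300Δ). Let V' ⊆ V, let Y ∈ ∏_{v∈V'} Q_v be a partial assignment with π_v^{-1}(Y(v)) ≠ ∅ for each v ∈ V', let H' be a connected component of H(Y), let M > 1 be a real number, and suppose |𝒞(H')| ≤ 20·Δ·log M. Let X be a random assignment whose coordinates are independent, with X(v) uniform on π_v^{-1}(Y(v)) for each v ∈ H' ∩ V' and X(v) uniform on Ω_v for each v ∈ H' ∖ V'. Then the probability that X satisfies every constraint C ∈ 𝒞(H') is at least (1 − 3b)^{|𝒞(H')|}, and hence at least M^{-η}. -/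
open Finset
open scoped Classical

/-- The graph `H(Y)` on the variables: `u ≠ w` are joined iff some constraint `c` with
`bad c` (i.e. `c` is not satisfied by the partial projected assignment `Y`) has
`u, w ∈ vbl c`. -/
def varGraph {V ι : Type*} (vbl : ι → Finset V) (bad : ι → Prop) : SimpleGraph V where
  Adj u w := u ≠ w ∧ ∃ c, bad c ∧ u ∈ vbl c ∧ w ∈ vbl c
  symm := by
    constructor
    rintro u w ⟨h, c, hc, hu, hw⟩
    exact ⟨h.symm, c, hc, hw, hu⟩
  loopless := by constructor; rintro u ⟨h, -⟩; exact h rfl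

/-!
The law of `X` is a product distribution under which each constraint `c` is violated with
probability at most `b`: where `X v` is uniform on all of `Ω v`, it hits `forb c v` no more often
than the uniform distribution on the fibre of `π v (forb c v)` would. A local-lemma induction then
shows that, conditioned on avoiding any set `S` of constraints, a further constraint `c` is
violated with probability at most `2b`: the at most `Δ` constraints of `S` sharing a variable with
`c` cost a factor at least `(1 - 2b)^Δ ≥ 1/2`, and the others are independent of `c`. Hence
`P ≥ (1 - 2b)^{|𝒞(H')|}`, and `log (1 - 3b) ≥ -6b` turns `|𝒞(H')| ≤ 20 Δ log M` and
`300 b Δ ≤ η` into `P ≥ M^{-η}`.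
-/

lemma pow_card_mul_le_of_le_insert {ι : Type*} (f : Finset ι → ℝ) {r : ℝ} (hr : 0 ≤ r)
    (A : Finset ι) {B : Finset ι}
    (h : ∀ T ⊆ B, ∀ c ∈ B, c ∉ T → r * f (A ∪ T) ≤ f (insert c (A ∪ T))) :
    r ^ #B * f A ≤ f (A ∪ B) := by
  induction B using Finset.induction_on with
  | empty => simp
  | insert a B ha ih =>
    have ih := ih fun T hT c hc => h T (hT.trans (subset_insert a B)) c (mem_insert_of_mem hc)
    calc r ^ #(insert a B) * f A = r * (r ^ #B * f A) := by rw [card_insert_of_notMem ha]; ring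
      _ ≤ r * f (A ∪ B) := mul_le_mul_of_nonneg_left ih hr
      _ ≤ f (A ∪ insert a B) := by
        rw [union_insert]; exact h B (subset_insert a B) a (mem_insert_self a B) ha

section Product
variable {V : Type*} [Fintype V] [DecidableEq V] {Ω : V → Type*} [∀ v, Fintype (Ω v)]

noncomputable def piProb (g : ∀ v, Ω v → ℝ) (E : (∀ v, Ω v) → Prop) : ℝ :=
  ∑ σ, if E σ then ∏ v, g v (σ v) else 0

variable {g : ∀ v, Ω v → ℝ}

lemma piProb_nonneg (hg : ∀ v x, 0 ≤ g v x) (E : (∀ v, Ω v) → Prop) : 0 ≤ piProb g E :=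
  sum_nonneg fun _ _ => ite_nonneg (prod_nonneg fun v _ => hg v _) le_rfl

lemma piProb_mono (hg : ∀ v x, 0 ≤ g v x) {E F : (∀ v, Ω v) → Prop} (h : ∀ σ, E σ → F σ) :
    piProb g E ≤ piProb g F :=
  sum_le_sum fun σ _ => by
    by_cases hE : E σ
    · simp [hE, h σ hE]
    · simpa [hE] using ite_nonneg (prod_nonneg fun v _ => hg v _) le_rfl

lemma piProb_true (hg : ∀ v, ∑ x, g v x = 1) : piProb g (fun _ => True) = 1 := by
  simp [piProb, ← Fintype.prod_sum, hg]

lemma piProb_and_not (E F : (∀ v, Ω v) → Prop) :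
    piProb g (fun σ => E σ ∧ ¬ F σ) = piProb g E - piProb g (fun σ => F σ ∧ E σ) := by
  rw [piProb, piProb, piProb, ← sum_sub_distrib]
  refine sum_congr rfl fun σ _ => ?_
  by_cases hE : E σ <;> by_cases hF : F σ <;> simp [hE, hF]

lemma piProb_agreeOn_and (hg : ∀ v, ∑ x, g v x = 1) (A : Finset V) (a : ∀ v, Ω v)
    {F : (∀ v, Ω v) → Prop} (hF : ∀ σ τ, (∀ v ∉ A, σ v = τ v) → F σ → F τ) :
    piProb g (fun σ => (∀ v ∈ A, σ v = a v) ∧ F σ) = (∏ v ∈ A, g v (a v)) * piProb g F := by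
  set e := Equiv.piEquivPiSubtypeProd (· ∈ A) Ω
  have e_symm_apply (x y) (v : V) : e.symm (x, y) v = if h : v ∈ A then x ⟨v, h⟩ else y ⟨v, h⟩ :=
    rfl
  have sum_split (f : (∀ v, Ω v) → ℝ) : ∑ σ, f σ = ∑ x, ∑ y, f (e.symm (x, y)) := by
    rw [← e.symm.sum_comp, Fintype.sum_prod_type]
  have weight_split (x y) : ∏ v, g v (e.symm (x, y) v) =
      (∏ v : {v // v ∈ A}, g v (x v)) * ∏ v : {v // v ∉ A}, g v (y v) := by
    rw [← Fintype.prod_subtype_mul_prod_subtype (· ∈ A)]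
    congr 1 <;> refine prod_congr (by congr!) fun v _ => by simp [e_symm_apply, v.2]
  set a' : ∀ v : {v // v ∈ A}, Ω v := fun v => a v
  have F_split (x y) : F (e.symm (x, y)) ↔ F (e.symm (a', y)) := by
    have agree (v) (hv : v ∉ A) : e.symm (x, y) v = e.symm (a', y) v := by simp [e_symm_apply, hv]
    exact ⟨hF _ _ agree, hF _ _ fun v hv => (agree v hv).symm⟩
  have agreeOn_split (x y) : (∀ v ∈ A, e.symm (x, y) v = a v) ↔ x = a' := by
    refine ⟨fun h => funext fun v => ?_, fun h v hv => by simp [e_symm_apply, hv, h, a']⟩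
    simpa [e_symm_apply, v.2] using h v v.2
  have mass : ∑ x : ∀ v : {v // v ∈ A}, Ω v, ∏ v : {v // v ∈ A}, g v (x v) = 1 := by
    rw [← Fintype.prod_sum]; simp [hg]
  have mass_A : ∏ v ∈ A, g v (a v) = ∏ v : {v // v ∈ A}, g v (a' v) :=
    prod_subtype A (fun _ => Iff.rfl) _
  simp only [piProb, sum_split, weight_split, F_split, agreeOn_split]
  simp_rw [← ite_zero_mul_ite_zero, ← mul_ite_zero]
  rw [← sum_mul_sum, ← sum_mul_sum, sum_ite_eq', if_pos (mem_univ _), mass, one_mul, mass_A]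

end Product

section LocalLemma
variable {V ι : Type*} {Ω : V → Type*}

def Avoids (vbl : ι → Finset V) (forb : ι → ∀ v, Ω v) (S : Finset ι) (σ : ∀ v, Ω v) : Prop :=
  ∀ c ∈ S, ∃ v ∈ vbl c, σ v ≠ forb c v

variable {g : ∀ v, Ω v → ℝ} {vbl : ι → Finset V} {forb : ι → ∀ v, Ω v}

lemma avoids_insert (c : ι) (S : Finset ι) :
    Avoids vbl forb (insert c S) =
      fun σ => Avoids vbl forb S σ ∧ ¬ ∀ v ∈ vbl c, σ v = forb c v := by
  funext σ
  simp only [Avoids, forall_mem_insert, not_forall, exists_prop, and_comm]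

lemma avoids_of_eqOn {S : Finset ι} {σ τ : ∀ v, Ω v}
    (hagree : ∀ v, (∃ c ∈ S, v ∈ vbl c) → σ v = τ v) (hσ : Avoids vbl forb S σ) :
    Avoids vbl forb S τ := fun c hc => by
  obtain ⟨v, hv, hne⟩ := hσ c hc
  exact ⟨v, hv, hagree v ⟨c, hc, hv⟩ ▸ hne⟩

variable [Fintype V] [DecidableEq V] [∀ v, Fintype (Ω v)]

lemma piProb_avoids_empty (hg : ∀ v, ∑ x, g v x = 1) : piProb g (Avoids vbl forb ∅) = 1 := by
  rw [← piProb_true hg]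
  congr
  funext σ
  simp [Avoids]

variable [Fintype ι] {b : ℝ} {Δ : ℕ}

theorem mul_piProb_avoids_le_insert (hg0 : ∀ v x, 0 ≤ g v x) (hg1 : ∀ v, ∑ x, g v x = 1)
    (hb0 : 0 ≤ b) (hb : 2 * b ≤ 1) (hbΔ : 4 * b * Δ ≤ 1)
    (hp : ∀ c, ∏ v ∈ vbl c, g v (forb c v) ≤ b)
    (hΔ : ∀ c, #{c' | (vbl c ∩ vbl c').Nonempty} ≤ Δ) (S : Finset ι) (c : ι) :
    (1 - 2 * b) * piProb g (Avoids vbl forb S) ≤ piProb g (Avoids vbl forb (insert c S)) := by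
  induction S using Finset.strongInduction generalizing c with
  | H S ih =>
  have hS := piProb_nonneg hg0 (Avoids vbl forb S)
  by_cases hcS : c ∈ S
  · rw [insert_eq_of_mem hcS]; nlinarith
  set near := S.filter fun c' => (vbl c ∩ vbl c').Nonempty
  set far := S.filter fun c' => ¬ (vbl c ∩ vbl c').Nonempty
  have hfar := piProb_nonneg hg0 (Avoids vbl forb far)
  have half : piProb g (Avoids vbl forb far) ≤ 2 * piProb g (Avoids vbl forb S) := by
    have hnearΔ : (#near : ℝ) ≤ Δ := by
      exact_mod_cast (card_le_card fun c' hc' => by simp_all [near]).trans (hΔ c)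
    have hpow : 1 / 2 ≤ (1 - 2 * b) ^ #near := by
      have bernoulli := one_add_mul_le_pow (a := -(2 * b)) (by linarith) #near
      rw [← sub_eq_add_neg] at bernoulli
      nlinarith
    have key := pow_card_mul_le_of_le_insert (fun T => piProb g (Avoids vbl forb T))
      (by linarith) far (B := near) fun T hT c' hc' hc'T => ih _ ?_ c'
    · rw [union_comm, filter_union_filter_not_eq] at key
      nlinarith
    · refine (ssubset_iff_of_subset (union_subset (filter_subset _ S) (hT.trans
        (filter_subset _ S)))).2 ⟨c', filter_subset _ S hc', ?_⟩
      simp only [mem_union, not_or]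
      exact ⟨fun h => (mem_filter.1 h).2 (mem_filter.1 hc').2, hc'T⟩
  have hbad : piProb g (fun σ => (∀ v ∈ vbl c, σ v = forb c v) ∧ Avoids vbl forb S σ)
      ≤ b * piProb g (Avoids vbl forb far) := by
    calc _ ≤ piProb g (fun σ => (∀ v ∈ vbl c, σ v = forb c v) ∧ Avoids vbl forb far σ) :=
          piProb_mono hg0 fun σ h => ⟨h.1, fun c' hc' => h.2 c' (filter_subset _ S hc')⟩
      _ = (∏ v ∈ vbl c, g v (forb c v)) * piProb g (Avoids vbl forb far) := by
          refine piProb_agreeOn_and hg1 _ _ fun σ τ hagree => avoids_of_eqOn ?_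
          rintro v ⟨c', hc', hv⟩
          exact hagree v fun hvc => (mem_filter.1 hc').2 ⟨v, mem_inter.2 ⟨hvc, hv⟩⟩
      _ ≤ b * piProb g (Avoids vbl forb far) := mul_le_mul_of_nonneg_right (hp c) hfar
  rw [avoids_insert, piProb_and_not]
  nlinarith

theorem pow_card_le_piProb_avoids (hg0 : ∀ v x, 0 ≤ g v x) (hg1 : ∀ v, ∑ x, g v x = 1)
    (hb0 : 0 ≤ b) (hb : 2 * b ≤ 1) (hbΔ : 4 * b * Δ ≤ 1)
    (hp : ∀ c, ∏ v ∈ vbl c, g v (forb c v) ≤ b)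
    (hΔ : ∀ c, #{c' | (vbl c ∩ vbl c').Nonempty} ≤ Δ) (S : Finset ι) :
    (1 - 2 * b) ^ #S ≤ piProb g (Avoids vbl forb S) := by
  simpa [piProb_avoids_empty hg1] using pow_card_mul_le_of_le_insert
    (fun T => piProb g (Avoids vbl forb T)) (by linarith) ∅ (B := S)
    fun T _ c _ _ => mul_piProb_avoids_le_insert hg0 hg1 hb0 hb hbΔ hp hΔ _ c

end LocalLemma

section Uniform
variable {α : Type*}

noncomputable def uniformWeight (s : Finset α) (x : α) : ℝ :=
  if x ∈ s then (#s : ℝ)⁻¹ else 0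

lemma uniformWeight_nonneg (s : Finset α) (x : α) : 0 ≤ uniformWeight s x := by
  unfold uniformWeight; positivity

lemma sum_uniformWeight [Fintype α] {s : Finset α} (hs : s.Nonempty) :
    ∑ x, uniformWeight s x = 1 := by
  simp only [uniformWeight]
  rw [← sum_filter, filter_mem_eq_inter, univ_inter, sum_const,
    nsmul_eq_mul, mul_inv_cancel₀ (by exact_mod_cast hs.card_pos.ne')]

lemma uniformWeight_le_inv_card {s t : Finset α} {x : α} (hx : x ∈ t) (hts : x ∈ s → t ⊆ s) :
    uniformWeight s x ≤ (#t : ℝ)⁻¹ := by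
  unfold uniformWeight
  split_ifs with hxs
  · exact inv_anti₀ (by exact_mod_cast card_pos.2 ⟨x, hx⟩)
      (by exact_mod_cast card_le_card (hts hxs))
  · positivity

variable {β : Type*} [Fintype α] [DecidableEq β] {p : Prop} [Decidable p] (f : α → β) (y : β)

lemma nonempty_ite_fiber_univ [Nonempty α] (hy : p → ∃ x, f x = y) :
    (if p then ({x | f x = y} : Finset α) else univ).Nonempty := by
  split_ifs with hp
  · obtain ⟨x, hx⟩ := hy hp
    exact ⟨x, by simpa using hx⟩
  · exact univ_nonempty

lemma uniformWeight_ite_fiber_univ (x : α) :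
    uniformWeight (if p then ({z | f z = y} : Finset α) else univ) x =
      if p then (if f x = y then (#{z | f z = y} : ℝ)⁻¹ else 0) else (Fintype.card α : ℝ)⁻¹ := by
  split_ifs <;> simp_all [uniformWeight]

lemma uniformWeight_ite_fiber_univ_le (x : α) :
    uniformWeight (if p then ({z | f z = y} : Finset α) else univ) x ≤ (#{z | f z = f x} : ℝ)⁻¹ :=
  uniformWeight_le_inv_card (by simp) fun hx => by
    split_ifs at hx ⊢ <;> simp_all [subset_iff]

end Uniform

lemma mul_le_and_mul_mul_le_of_le_div {b c η : ℝ} {Δ : ℕ} (hc : 0 < c) (hη : 0 ≤ η)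
    (hb : b ≤ η / (c * Δ)) : c * b ≤ η ∧ c * b * Δ ≤ η := by
  rcases Nat.eq_zero_or_pos Δ with rfl | hΔ
  · simp only [Nat.cast_zero, mul_zero, div_zero] at hb ⊢
    constructor <;> nlinarith
  · have hΔ1 : (1 : ℝ) ≤ Δ := by exact_mod_cast hΔ
    have hbΔ : b * (c * Δ) ≤ η := mul_le_of_le_div₀ hη (by positivity) hb
    constructor <;> nlinarith

lemma rpow_neg_le_one_sub_pow {x η M : ℝ} {n : ℕ} (hx0 : 0 ≤ x) (hx : 2 * x ≤ 1) (hM : 0 < M)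
    (hn : 2 * x * n ≤ η * Real.log M) : M ^ (-η) ≤ (1 - x) ^ n := by
  have h1x : 0 < 1 - x := by linarith
  have hinv : (1 - x)⁻¹ ≤ 1 + 2 * x := by
    rw [inv_le_iff_one_le_mul₀ h1x]; nlinarith
  have hlog : -(2 * x) ≤ Real.log (1 - x) := by
    linarith [Real.one_sub_inv_le_log_of_pos h1x]
  rw [Real.rpow_def_of_pos hM, ← Real.exp_log (pow_pos h1x n), Real.log_pow]
  exact Real.exp_le_exp.2 (by nlinarith)

theorem stmt_5_general {V : Type*} [Fintype V] [DecidableEq V]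
    {Ω : V → Type*} [∀ v, Fintype (Ω v)] [∀ v, DecidableEq (Ω v)]
    (hΩ : ∀ v, 2 ≤ Fintype.card (Ω v))
    {Q : V → Type*} [∀ v, DecidableEq (Q v)]
    {ι : Type*} [Fintype ι]
    (vbl : ι → Finset V) (forb : ι → ∀ v, Ω v) (π : ∀ v, Ω v → Q v)
    (Δ : ℕ)
    (hΔ : IsGreatest (Set.range fun c : ι =>
      ((univ : Finset ι).filter fun c' => (vbl c ∩ vbl c').Nonempty).card) Δ)
    (η : ℝ) (hη : 0 < η ∧ η < 1/2)
    (b : ℝ)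
    (hb : IsGreatest (Set.range fun c : ι => ∏ v ∈ vbl c,
      (((univ : Finset (Ω v)).filter fun x => π v x = π v (forb c v)).card : ℝ)⁻¹) b)
    (hbsmall : b ≤ η / (300 * (Δ : ℝ)))
    (V' : Finset V) (Y : ∀ v, Q v)
    (hYfib : ∀ v ∈ V', ∃ x : Ω v, π v x = Y v)
    -- `𝒞(Y)`: the constraints not satisfied by the partial assignment `Y` on `V'`
    (CY : Set ι)
    -- a connected component `H'` of `H(Y)`, with vertex set `K.supp`
    (K : (varGraph vbl (· ∈ CY)).ConnectedComponent)
    -- `𝒞(H')`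
    (CH : Set ι)
    (M : ℝ) (hM : 1 < M)
    (hsize : (CH.ncard : ℝ) ≤ 20 * (Δ : ℝ) * Real.log M)
    -- `P`: the probability that `X` satisfies every constraint in `𝒞(H')`
    (P : ℝ)
    (hP : P = ∑ σ : ∀ v, Ω v,
      (if ∀ c ∈ CH, ∃ v ∈ vbl c, σ v ≠ forb c v then
        ∏ v, (if v ∈ K.supp ∧ v ∈ V' then
                (if π v (σ v) = Y v then
                  (((univ : Finset (Ω v)).filter fun z => π v z = Y v).card : ℝ)⁻¹
                 else 0)
              else ((Fintype.card (Ω v) : ℝ))⁻¹)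
       else 0)) :
    (1 - 3 * b) ^ CH.ncard ≤ P ∧ M ^ (-η) ≤ P := by
  have hb0 : 0 ≤ b := by
    obtain ⟨c, hc⟩ := hb.1
    rw [← hc]
    positivity
  obtain ⟨hb300, hbΔ⟩ :=
    mul_le_and_mul_mul_le_of_le_div (by norm_num : (0 : ℝ) < 300) hη.1.le hbsmall
  set g : ∀ v, Ω v → ℝ := fun v => uniformWeight
    (if v ∈ K.supp ∧ v ∈ V' then ({z | π v z = Y v} : Finset (Ω v)) else univ)
  have hP' : P = piProb g (Avoids vbl forb CH.toFinset) := by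
    simp only [hP, piProb, Avoids, Set.mem_toFinset, g, uniformWeight_ite_fiber_univ]
  have hg1 (v : V) : ∑ x, g v x = 1 :=
    have : Nonempty (Ω v) := Fintype.card_pos_iff.1 (by linarith [hΩ v])
    sum_uniformWeight (nonempty_ite_fiber_univ _ _ fun hv => hYfib v hv.2)
  have hp (c : ι) : ∏ v ∈ vbl c, g v (forb c v) ≤ b :=
    (prod_le_prod (fun v _ => uniformWeight_nonneg _ _)
      fun v _ => uniformWeight_ite_fiber_univ_le _ _ _).trans (hb.2 ⟨c, rfl⟩)
  have hlower : (1 - 3 * b) ^ CH.ncard ≤ P := by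
    rw [hP', Set.ncard_eq_toFinset_card']
    exact (pow_le_pow_left₀ (by linarith) (by linarith : 1 - 3 * b ≤ 1 - 2 * b) _).trans
      (pow_card_le_piProb_avoids (fun v _ => uniformWeight_nonneg _ _) hg1 hb0 (by linarith)
        (by linarith) hp (fun c => hΔ.2 ⟨c, rfl⟩) _)
  have hlogM := Real.log_pos hM
  have hn : 2 * (3 * b) * CH.ncard ≤ η * Real.log M :=
    calc 2 * (3 * b) * CH.ncard ≤ 6 * b * (20 * Δ * Real.log M) := by
          linarith [mul_le_mul_of_nonneg_left hsize (by linarith : (0 : ℝ) ≤ 6 * b)]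
      _ = 120 * b * Δ * Real.log M := by ring
      _ ≤ η * Real.log M := by
          refine mul_le_mul_of_nonneg_right ?_ hlogM.le
          linarith [mul_nonneg hb0 (Nat.cast_nonneg (α := ℝ) Δ)]
  exact ⟨hlower, (rpow_neg_le_one_sub_pow (by linarith) (by linarith) (by linarith) hn).trans
    hlower⟩

/-- **Success probability of rejection sampling on a small component.**
`Φ` is an atomic CSP of degree `Δ`, `π` a projection scheme with
`b = max_C ∏_{v ∈ vbl C} |π_v⁻¹(𝐂_π(v))|⁻¹ ≤ η/(300Δ)` for some `η ∈ (0,1/2)`.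
Given a partial projected assignment `Y` on `V' ⊆ V` (with nonempty fibres on `V'`), a connected
component `H'` (with vertex set `K.supp`) of the graph `H(Y)`, and `M > 1` with
`|𝒞(H')| ≤ 20·Δ·log M`, let `X` have independent coordinates, uniform on `π_v⁻¹(Y v)` for
`v ∈ H' ∩ V'` and uniform on `Ω v` for `v ∈ H' \ V'` (and, immaterially, uniform on `Ω v`
outside `H'`).  Then the probability `P` that `X` satisfies every constraint in `𝒞(H')` is at
least `(1-3b)^{|𝒞(H')|}`, hence at least `M^{-η}`. -/
theorem stmt_5 {V : Type*} [Fintype V] [DecidableEq V]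
    {Ω : V → Type*} [∀ v, Fintype (Ω v)] [∀ v, DecidableEq (Ω v)]
    (hΩ : ∀ v, 2 ≤ Fintype.card (Ω v))
    {Q : V → Type*} [∀ v, Fintype (Q v)] [∀ v, DecidableEq (Q v)]
    {ι : Type*} [Fintype ι]
    (vbl : ι → Finset V) (forb : ι → ∀ v, Ω v) (π : ∀ v, Ω v → Q v)
    (Δ : ℕ)
    (hΔ : IsGreatest (Set.range fun c : ι =>
      ((univ : Finset ι).filter fun c' => (vbl c ∩ vbl c').Nonempty).card) Δ)
    (η : ℝ) (hη : 0 < η ∧ η < 1/2)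
    (b : ℝ)
    (hb : IsGreatest (Set.range fun c : ι => ∏ v ∈ vbl c,
      (((univ : Finset (Ω v)).filter fun x => π v x = π v (forb c v)).card : ℝ)⁻¹) b)
    (hbsmall : b ≤ η / (300 * (Δ : ℝ)))
    (V' : Finset V) (Y : ∀ v, Q v)
    (hYfib : ∀ v ∈ V', ∃ x : Ω v, π v x = Y v)
    -- `𝒞(Y)`: the constraints not satisfied by the partial assignment `Y` on `V'`
    (CY : Set ι) (hCY : CY = {c : ι | ∀ v ∈ vbl c, v ∈ V' → Y v = π v (forb c v)})
    -- a connected component `H'` of `H(Y)`, with vertex set `K.supp`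
    (K : (varGraph vbl (· ∈ CY)).ConnectedComponent)
    -- `𝒞(H')`
    (CH : Set ι) (hCH : CH = {c : ι | c ∈ CY ∧ ∀ v ∈ vbl c, v ∈ K.supp})
    (M : ℝ) (hM : 1 < M)
    (hsize : (CH.ncard : ℝ) ≤ 20 * (Δ : ℝ) * Real.log M)
    -- `P`: the probability that `X` satisfies every constraint in `𝒞(H')`
    (P : ℝ)
    (hP : P = ∑ σ : ∀ v, Ω v,
      (if ∀ c ∈ CH, ∃ v ∈ vbl c, σ v ≠ forb c v then
        ∏ v, (if v ∈ K.supp ∧ v ∈ V' then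
                (if π v (σ v) = Y v then
                  (((univ : Finset (Ω v)).filter fun z => π v z = Y v).card : ℝ)⁻¹
                 else 0)
              else ((Fintype.card (Ω v) : ℝ))⁻¹)
       else 0)) :
    (1 - 3 * b) ^ CH.ncard ≤ P ∧ M ^ (-η) ≤ P :=
  stmt_5_general hΩ vbl forb π Δ hΔ η hη b hb hbsmall V' Y hYfib CY K CH M hM hsize P hP
end

section
/- Let Φ be an atomic CSP with degree Δ and let π be a projection scheme with e·b·Δ ≤ 1, so that all conditional distributions μ_π[value(v) = · | Y^{-v}] are well defined. Fix v ∈ V and X, Y ∈ ∏_{u∈V} Q_u. Let 𝒞' be the set of constraints C ∈ 𝒞 that are not satisfied by at least one of the partial assignments X^{-v} and Y^{-v}, let G' be the subgraph of G(𝒞) induced on 𝒞', and let K ⊆ V be the union of vbl(C) over all C ∈ 𝒞' that lie in a connected component of G' containing at least one constraint whose variable set contains v. If X(u) = Y(u) for every u ∈ K ∖ {v}, then μ_π[value(v) = · | X^{-v}] = μ_π[value(v) = · | Y^{-v}] as distributions on Q_v. -/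
open Finset

/-- The subgraph of the constraint graph `G(𝒞)` induced on the constraints satisfying `P`:
two distinct constraints satisfying `P` are joined iff their variable sets intersect. -/
def inducedConstraintGraph {V ι : Type*} [DecidableEq V] (vbl : ι → Finset V)
    (P : ι → Prop) : SimpleGraph ι where
  Adj c c' := c ≠ c' ∧ P c ∧ P c' ∧ (vbl c ∩ vbl c').Nonempty
  symm := ⟨by
    rintro c c' ⟨h, hc, hc', x, hx⟩
    rw [Finset.mem_inter] at hx
    exact ⟨h.symm, hc', hc, x, Finset.mem_inter.mpr ⟨hx.2, hx.1⟩⟩⟩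
  loopless := ⟨by rintro c ⟨h, -⟩; exact h rfl⟩

/-!
Conditioning `μ` on the projections `Z^{-v}` (for `Z = X` or `Y`) gives the uniform distribution
on the satisfying assignments of the box `B_Z = ∏_u π_u⁻¹(Z u)`, with the whole of `Ω_v` at `v`.
Every constraint outside `𝒞'` is satisfied throughout `B_Z`, so an assignment of `B_Z` is
satisfying iff it satisfies the constraints of the components of `G'` that meet `v`, which only
read the variables of `W = {v} ∪ K`, and the other constraints of `𝒞'`, which only read variables
outside `W`. Hence the count factorises along `W` and its complement, the marginal at `v` only
sees the `W`-part, and `B_X`, `B_Y` agree on `W`. The Lovász local lemma on `B_Z`, with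
`e·b·Δ ≤ 1`, makes all the counts involved positive.
-/

section Box

open Fintype

variable {V : Type*} {Ω : V → Type*} {W : Set V} [DecidablePred (· ∈ W)]

theorem Set.piecewise_piecewise_piecewise (σ τ : ∀ v, Ω v) :
    W.piecewise (W.piecewise σ τ) (W.piecewise τ σ) = σ := by
  funext u
  by_cases hu : u ∈ W <;> simp [hu]

variable [Fintype V] [DecidableEq V]

theorem Set.piecewise_mem_piFinset_of_dependsOn {U U' : ∀ v, Finset (Ω v)}
    (hU : ∀ u ∈ W, U u = U' u) {P Q : (∀ v, Ω v) → Prop}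
    (hP : DependsOn P W) (hQ : DependsOn Q Wᶜ) {σ τ : ∀ v, Ω v}
    (hσ : σ ∈ piFinset U) (hPσ : P σ) (hτ : τ ∈ piFinset U') (hQτ : Q τ) :
    W.piecewise σ τ ∈ piFinset U' ∧ P (W.piecewise σ τ) ∧ Q (W.piecewise σ τ) := by
  rw [mem_piFinset] at hσ hτ ⊢
  refine ⟨fun u => ?_, (hP fun u hu => ?_).mp hPσ, (hQ fun u hu => ?_).mp hQτ⟩
  · by_cases hu : u ∈ W
    · simpa [hu, ← hU u hu] using hσ u
    · simpa [hu] using hτ u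
  · simp [Set.piecewise_eq_of_mem _ _ _ hu]
  · simp [Set.piecewise_eq_of_notMem _ _ _ hu]

/-- Exchanging the `W`-coordinates of two boxes that agree on `W` is a bijection. -/
theorem card_filter_mul_card_filter_swap {U₁ U₂ : ∀ v, Finset (Ω v)}
    (hU : ∀ u ∈ W, U₁ u = U₂ u) {P₁ P₂ Q₁ Q₂ : (∀ v, Ω v) → Prop} [DecidablePred P₁]
    [DecidablePred P₂] [DecidablePred Q₁] [DecidablePred Q₂]
    (hP₁ : DependsOn P₁ W) (hP₂ : DependsOn P₂ W) (hQ₁ : DependsOn Q₁ Wᶜ)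
    (hQ₂ : DependsOn Q₂ Wᶜ) :
    #{σ ∈ piFinset U₁ | P₁ σ ∧ Q₁ σ} * #{σ ∈ piFinset U₂ | P₂ σ ∧ Q₂ σ} =
      #{σ ∈ piFinset U₂ | P₁ σ ∧ Q₂ σ} * #{σ ∈ piFinset U₁ | P₂ σ ∧ Q₁ σ} := by
  have hU' : ∀ u ∈ W, U₂ u = U₁ u := fun u hu => (hU u hu).symm
  rw [← card_product, ← card_product]
  refine card_nbij' (fun p => (W.piecewise p.1 p.2, W.piecewise p.2 p.1))
    (fun p => (W.piecewise p.1 p.2, W.piecewise p.2 p.1)) ?_ ?_ ?_ ?_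
  · rintro ⟨σ, τ⟩ h
    simp only [coe_product, Set.mem_prod, mem_coe, mem_filter] at h ⊢
    obtain ⟨⟨hσ, hP₁σ, hQ₁σ⟩, hτ, hP₂τ, hQ₂τ⟩ := h
    exact ⟨Set.piecewise_mem_piFinset_of_dependsOn hU hP₁ hQ₂ hσ hP₁σ hτ hQ₂τ,
      Set.piecewise_mem_piFinset_of_dependsOn hU' hP₂ hQ₁ hτ hP₂τ hσ hQ₁σ⟩
  · rintro ⟨σ, τ⟩ h
    simp only [coe_product, Set.mem_prod, mem_coe, mem_filter] at h ⊢
    obtain ⟨⟨hσ, hP₁σ, hQ₂σ⟩, hτ, hP₂τ, hQ₁τ⟩ := h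
    exact ⟨Set.piecewise_mem_piFinset_of_dependsOn hU' hP₁ hQ₁ hσ hP₁σ hτ hQ₁τ,
      Set.piecewise_mem_piFinset_of_dependsOn hU hP₂ hQ₂ hτ hP₂τ hσ hQ₂σ⟩
  all_goals
    rintro ⟨σ, τ⟩ -
    simp only [Set.piecewise_piecewise_piecewise]

theorem card_filter_and_mul_card_piFinset (U : ∀ v, Finset (Ω v))
    {P Q : (∀ v, Ω v) → Prop} [DecidablePred P] [DecidablePred Q]
    (hP : DependsOn P W) (hQ : DependsOn Q Wᶜ) :
    #{σ ∈ piFinset U | P σ ∧ Q σ} * #(piFinset U) =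
      #{σ ∈ piFinset U | P σ} * #{σ ∈ piFinset U | Q σ} := by
  simpa [mul_comm] using card_filter_mul_card_filter_swap (fun _ _ => rfl) hP
    (P₂ := fun _ => True) (Q₂ := fun _ => True) (fun _ _ _ => rfl) hQ (fun _ _ _ => rfl)

theorem card_filter_and_div_card_filter_and (U : ∀ v, Finset (Ω v))
    {P P' Q : (∀ v, Ω v) → Prop} [DecidablePred P] [DecidablePred P'] [DecidablePred Q]
    (hP : DependsOn P W) (hP' : DependsOn P' W) (hQ : DependsOn Q Wᶜ)
    (h : 0 < #{σ ∈ piFinset U | P' σ ∧ Q σ}) :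
    (#{σ ∈ piFinset U | P σ ∧ Q σ} : ℝ) / #{σ ∈ piFinset U | P' σ ∧ Q σ} =
      (#{σ ∈ piFinset U | P σ} : ℝ) / #{σ ∈ piFinset U | P' σ} := by
  have hbox : (#(piFinset U) : ℝ) ≠ 0 := by
    exact_mod_cast (h.trans_le (card_filter_le _ _)).ne'
  have hQ₀ : (#{σ ∈ piFinset U | Q σ} : ℝ) ≠ 0 := by
    exact_mod_cast
      (h.trans_le (card_le_card (monotone_filter_right _ fun _ _ => And.right))).ne'
  have e := congrArg (Nat.cast (R := ℝ)) (card_filter_and_mul_card_piFinset U hP hQ)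
  have e' := congrArg (Nat.cast (R := ℝ)) (card_filter_and_mul_card_piFinset U hP' hQ)
  push_cast at e e'
  rw [← mul_div_mul_right _ _ hbox, e, e', mul_div_mul_right _ _ hQ₀]

theorem card_filter_div_card_filter_eq_of_eqOn {U₁ U₂ : ∀ v, Finset (Ω v)}
    (hU : ∀ u ∈ W, U₁ u = U₂ u) {P P' : (∀ v, Ω v) → Prop} [DecidablePred P] [DecidablePred P']
    (hP : DependsOn P W) (hP' : DependsOn P' W)
    (h₁ : 0 < #{σ ∈ piFinset U₁ | P' σ}) (h₂ : 0 < #{σ ∈ piFinset U₂ | P' σ}) :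
    (#{σ ∈ piFinset U₁ | P σ} : ℝ) / #{σ ∈ piFinset U₁ | P' σ} =
      (#{σ ∈ piFinset U₂ | P σ} : ℝ) / #{σ ∈ piFinset U₂ | P' σ} := by
  have e := card_filter_mul_card_filter_swap hU hP hP' (Q₁ := fun _ => True)
    (Q₂ := fun _ => True) (fun _ _ _ => rfl) (fun _ _ _ => rfl)
  simp only [and_true] at e
  rw [div_eq_div_iff (by positivity) (by positivity)]
  exact_mod_cast e

theorem card_filter_and_div_card_filter_and_eq_of_eqOn {U₁ U₂ : ∀ v, Finset (Ω v)}
    (hU : ∀ u ∈ W, U₁ u = U₂ u)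
    {P P' Q : (∀ v, Ω v) → Prop} [DecidablePred P] [DecidablePred P'] [DecidablePred Q]
    (hP : DependsOn P W) (hP' : DependsOn P' W) (hQ : DependsOn Q Wᶜ)
    (h₁ : 0 < #{σ ∈ piFinset U₁ | P' σ ∧ Q σ}) (h₂ : 0 < #{σ ∈ piFinset U₂ | P' σ ∧ Q σ}) :
    (#{σ ∈ piFinset U₁ | P σ ∧ Q σ} : ℝ) / #{σ ∈ piFinset U₁ | P' σ ∧ Q σ} =
      (#{σ ∈ piFinset U₂ | P σ ∧ Q σ} : ℝ) / #{σ ∈ piFinset U₂ | P' σ ∧ Q σ} := by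
  have hsub {U : ∀ v, Finset (Ω v)} :
      #{σ ∈ piFinset U | P' σ ∧ Q σ} ≤ #{σ ∈ piFinset U | P' σ} :=
    card_le_card (monotone_filter_right _ fun _ _ => And.left)
  rw [card_filter_and_div_card_filter_and U₁ hP hP' hQ h₁,
    card_filter_and_div_card_filter_and U₂ hP hP' hQ h₂]
  exact card_filter_div_card_filter_eq_of_eqOn hU hP hP' (h₁.trans_le hsub) (h₂.trans_le hsub)

variable [∀ v, DecidableEq (Ω v)]

theorem filter_piFinset_forall_eq (U : ∀ v, Finset (Ω v)) (W : Finset V) (f : ∀ v, Ω v) :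
    {σ ∈ piFinset U | ∀ u ∈ W, σ u = f u} =
      piFinset fun u => if u ∈ W then {x ∈ U u | x = f u} else U u := by
  ext σ
  simp only [mem_filter, mem_piFinset]
  constructor
  · rintro ⟨hσ, hf⟩ u
    by_cases hu : u ∈ W <;> simp [hu, hσ u, ← hf u]
  · intro h
    refine ⟨fun u => ?_, fun u hu => ?_⟩ <;> have hσ := h u
    · split_ifs at hσ
      exacts [(mem_filter.mp hσ).1, hσ]
    · rw [if_pos hu, mem_filter] at hσ
      exact hσ.2

theorem card_filter_forall_eq_mul_prod_le (U : ∀ v, Finset (Ω v)) (W : Finset V)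
    (f : ∀ v, Ω v) (w : V → ℕ) (hw : ∀ u ∈ W, #{x ∈ U u | x = f u} * w u ≤ #(U u)) :
    #{σ ∈ piFinset U | ∀ u ∈ W, σ u = f u} * ∏ u ∈ W, w u ≤ #(piFinset U) := by
  rw [filter_piFinset_forall_eq, card_piFinset, card_piFinset, ← Fintype.prod_ite_mem W,
    ← prod_mul_distrib]
  refine prod_le_prod' fun u _ => ?_
  split_ifs with hu
  exacts [hw u hu, (mul_one _).le]

end Box

theorem one_add_inv_pow_le_exp_one {n : ℕ} (hn : 0 < n) : (1 + (n : ℝ)⁻¹) ^ n ≤ Real.exp 1 := by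
  calc (1 + (n : ℝ)⁻¹) ^ n ≤ Real.exp (n : ℝ)⁻¹ ^ n := by
        gcongr
        linarith [Real.add_one_le_exp (n : ℝ)⁻¹]
    _ = Real.exp 1 := by
        rw [← Real.exp_nat_mul, mul_inv_cancel₀ (by positivity)]

theorem inv_exp_mul_le_inv_mul_one_sub_inv_pow {n : ℕ} (hn : 0 < n) :
    (Real.exp 1 * n)⁻¹ ≤ ((n : ℝ) + 1)⁻¹ * (1 - ((n : ℝ) + 1)⁻¹) ^ (n - 1) := by
  obtain ⟨k, rfl⟩ : ∃ k, n = k + 1 := ⟨n - 1, by omega⟩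
  have hk : (0 : ℝ) < k + 1 := by positivity
  have key := one_add_inv_pow_le_exp_one hn
  rw [add_tsub_cancel_right, show (1 : ℝ) - ((k + 1 : ℕ) + 1 : ℝ)⁻¹ = (k + 1) / (k + 2) by
    push_cast; field_simp; ring]
  rw [show (1 + ((k + 1 : ℕ) : ℝ)⁻¹) = (k + 2) / (k + 1) by push_cast; field_simp; ring,
    div_pow] at key
  rw [div_le_iff₀ (by positivity)] at key
  rw [div_pow, inv_le_iff_one_le_mul₀ (by positivity)]
  push_cast
  calc (1 : ℝ) = (k + 2) ^ (k + 1) / (k + 2) ^ (k + 1) := by rw [div_self (by positivity)]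
    _ ≤ Real.exp 1 * (k + 1) ^ (k + 1) / (k + 2) ^ (k + 1) := by gcongr
    _ = _ := by rw [pow_succ]; field_simp; ring

theorem pow_mul_le_of_le_insert {ι : Type*} [DecidableEq ι] {g : Finset ι → ℝ} {r : ℝ}
    (hr : 0 ≤ r) {T : Finset ι} (hstep : ∀ T' ⊂ T, ∀ c, r * g T' ≤ g (insert c T'))
    {R S : Finset ι} (hRS : Disjoint R S) (hT : R ∪ S ⊆ T) : r ^ #S * g R ≤ g (R ∪ S) := by
  induction S using Finset.induction_on with
  | empty => simp
  | @insert a S ha ih =>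
    have haR : a ∉ R := fun h => disjoint_left.mp hRS h (mem_insert_self a S)
    have hT' : R ∪ S ⊆ T := (union_subset_union_right (subset_insert a S)).trans hT
    have hsub : R ∪ S ⊂ T := (ssubset_iff_of_subset hT').mpr
      ⟨a, hT (by simp), by simp [haR, ha]⟩
    calc r ^ #(insert a S) * g R = r * (r ^ #S * g R) := by
          rw [card_insert_of_notMem ha, pow_succ]; ring
      _ ≤ r * g (R ∪ S) := by
          gcongr
          exact ih (disjoint_of_subset_right (subset_insert a S) hRS) hT'
      _ ≤ g (insert a (R ∪ S)) := hstep _ hsub a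
      _ = g (R ∪ insert a S) := by rw [union_insert]

theorem card_filter_inter_nonempty_le {V ι : Type*} [Fintype ι] [DecidableEq V]
    (vbl : ι → Finset V) {Δ : ℕ}
    (hΔ : ∀ c : ι, #{c' | (vbl c ∩ vbl c').Nonempty} ≤ Δ)
    {c : ι} (hc : (vbl c).Nonempty) {T : Finset ι} (hcT : c ∉ T) :
    #{j ∈ T | (vbl c ∩ vbl j).Nonempty} ≤ Δ - 1 := by
  have hsub : {j ∈ T | (vbl c ∩ vbl j).Nonempty} ⊂ ({c' | (vbl c ∩ vbl c').Nonempty} : Finset ι) :=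
    (ssubset_iff_of_subset (monotone_filter_left _ (subset_univ T))).mpr
      ⟨c, by simpa using hc, fun h => hcT (mem_filter.mp h).1⟩
  have := card_lt_card hsub
  have := hΔ c
  omega

section LovaszLocalLemma

open Fintype

variable {V ι : Type*} [Fintype V] [DecidableEq V] {Ω : V → Type*}
  (U : ∀ v, Finset (Ω v)) (A : ι → (∀ v, Ω v) → Prop) [∀ c, DecidablePred (A c)]

def avoiding (T : Finset ι) : Finset (∀ v, Ω v) := {σ ∈ piFinset U | ∀ c ∈ T, ¬ A c σ}

variable {U A}

theorem avoiding_anti {T T' : Finset ι} (h : T ⊆ T') : avoiding U A T' ⊆ avoiding U A T :=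
  monotone_filter_right _ fun _ _ hσ c hc => hσ c (h hc)

theorem card_avoiding_eq_add [DecidableEq ι] (T : Finset ι) (c : ι) :
    #(avoiding U A T) = #(avoiding U A (insert c T)) + #{σ ∈ avoiding U A T | A c σ} := by
  rw [← card_filter_add_card_filter_not (s := avoiding U A T) (A c), add_comm]
  congr 2
  ext σ
  simp only [avoiding, mem_filter, forall_mem_insert]
  tauto

theorem card_filter_avoiding_mul_card {vbl : ι → Finset V}
    (hA : ∀ c, DependsOn (A c) (vbl c)) {c : ι} {T : Finset ι}
    (hT : ∀ j ∈ T, Disjoint (vbl c) (vbl j)) :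
    #{σ ∈ avoiding U A T | A c σ} * #(piFinset U) =
      #{σ ∈ piFinset U | A c σ} * #(avoiding U A T) := by
  have hT' : DependsOn (fun σ => ∀ j ∈ T, ¬ A j σ) (↑(vbl c))ᶜ := fun σ τ h =>
    propext <| forall₂_congr fun j hj => by
      rw [hA j fun u hu => h u (disjoint_right.mp (hT j hj) hu)]
  rw [avoiding, filter_filter, filter_congr (fun σ _ => and_comm)]
  exact card_filter_and_mul_card_piFinset U (hA c) hT'

theorem card_filter_avoiding_le_mul [Fintype ι] [DecidableEq ι] {vbl : ι → Finset V}
    (hU : ∀ v, (U v).Nonempty) (hA : ∀ c, DependsOn (A c) (vbl c))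
    (hvbl : ∀ c, (vbl c).Nonempty) {Δ : ℕ}
    (hΔ : ∀ c : ι, #{c' | (vbl c ∩ vbl c').Nonempty} ≤ Δ) {x : ℝ} (hx₀ : 0 ≤ x) (hx₁ : x ≤ 1)
    (hp : ∀ c, (#{σ ∈ piFinset U | A c σ} : ℝ) ≤ x * (1 - x) ^ (Δ - 1) * #(piFinset U))
    {T : Finset ι}
    (hstep : ∀ T' ⊂ T, ∀ c, (1 - x) * #(avoiding U A T') ≤ (#(avoiding U A (insert c T')) : ℝ))
    {c : ι} (hcT : c ∉ T) :
    (#{σ ∈ avoiding U A T | A c σ} : ℝ) ≤ x * #(avoiding U A T) := by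
  set T₁ := {j ∈ T | (vbl c ∩ vbl j).Nonempty}
  set T₂ := {j ∈ T | ¬(vbl c ∩ vbl j).Nonempty}
  have hbox : (0 : ℝ) < #(piFinset U) := Nat.cast_pos.mpr <| by
    rw [card_piFinset]; exact prod_pos fun v _ => card_pos.mpr (hU v)
  have hchain : (1 - x) ^ #T₁ * #(avoiding U A T₂) ≤ (#(avoiding U A T) : ℝ) := by
    have := pow_mul_le_of_le_insert (sub_nonneg.2 hx₁) hstep
      (disjoint_filter_filter_not T T fun j => (vbl c ∩ vbl j).Nonempty).symm
      (union_subset (filter_subset _ _) (filter_subset _ _))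
    rwa [union_comm, filter_union_filter_not_eq] at this
  have hT₂ : ∀ j ∈ T₂, Disjoint (vbl c) (vbl j) := fun j hj =>
    disjoint_iff_inter_eq_empty.mpr (not_nonempty_iff_eq_empty.mp (mem_filter.mp hj).2)
  -- `A c` is independent of the events of `T₂`; restoring those of `T₁` costs `1 - x` each.
  refine le_of_mul_le_mul_right ?_ hbox
  calc (#{σ ∈ avoiding U A T | A c σ} : ℝ) * #(piFinset U)
      ≤ #{σ ∈ avoiding U A T₂ | A c σ} * #(piFinset U) := by
        gcongr
        exact avoiding_anti (filter_subset _ _)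
    _ = #{σ ∈ piFinset U | A c σ} * #(avoiding U A T₂) := by
        exact_mod_cast card_filter_avoiding_mul_card hA hT₂
    _ ≤ x * (1 - x) ^ (Δ - 1) * #(piFinset U) * #(avoiding U A T₂) := by gcongr; exact hp c
    _ ≤ x * (1 - x) ^ #T₁ * #(piFinset U) * #(avoiding U A T₂) := by
        gcongr x * ?_ * _ * _
        exact pow_le_pow_of_le_one (by linarith) (by linarith)
          (card_filter_inter_nonempty_le vbl hΔ (hvbl c) hcT)
    _ = x * #(piFinset U) * ((1 - x) ^ #T₁ * #(avoiding U A T₂)) := by ring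
    _ ≤ x * #(piFinset U) * #(avoiding U A T) := by gcongr
    _ = x * #(avoiding U A T) * #(piFinset U) := by ring

theorem one_sub_mul_card_avoiding_le [Fintype ι] [DecidableEq ι] {vbl : ι → Finset V}
    (hU : ∀ v, (U v).Nonempty) (hA : ∀ c, DependsOn (A c) (vbl c))
    (hvbl : ∀ c, (vbl c).Nonempty) {Δ : ℕ}
    (hΔ : ∀ c : ι, #{c' | (vbl c ∩ vbl c').Nonempty} ≤ Δ) {x : ℝ} (hx₀ : 0 ≤ x) (hx₁ : x ≤ 1)
    (hp : ∀ c, (#{σ ∈ piFinset U | A c σ} : ℝ) ≤ x * (1 - x) ^ (Δ - 1) * #(piFinset U))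
    (T : Finset ι) (c : ι) :
    (1 - x) * #(avoiding U A T) ≤ #(avoiding U A (insert c T)) := by
  induction T using Finset.strongInduction generalizing c with
  | H T ih =>
  by_cases hcT : c ∈ T
  · rw [insert_eq_of_mem hcT]
    nlinarith [(#(avoiding U A T)).cast_nonneg (α := ℝ)]
  have hsplit : (#(avoiding U A T) : ℝ) =
      #(avoiding U A (insert c T)) + #{σ ∈ avoiding U A T | A c σ} := by
    exact_mod_cast card_avoiding_eq_add T c
  linarith [card_filter_avoiding_le_mul hU hA hvbl hΔ hx₀ hx₁ hp ih hcT]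

/-- The symmetric Lovász local lemma, for events determined by sets of independent uniform
coordinates, in counting form. -/
theorem card_filter_forall_not_pos [Fintype ι] {vbl : ι → Finset V}
    (hU : ∀ v, (U v).Nonempty) (hA : ∀ c, DependsOn (A c) (vbl c))
    (hvbl : ∀ c, (vbl c).Nonempty) {Δ : ℕ}
    (hΔ : ∀ c : ι, #{c' | (vbl c ∩ vbl c').Nonempty} ≤ Δ) {p : ℝ}
    (hp : ∀ c, (#{σ ∈ piFinset U | A c σ} : ℝ) ≤ p * #(piFinset U))
    (hLLL : Real.exp 1 * p * Δ ≤ 1) :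
    0 < #{σ ∈ piFinset U | ∀ c, ¬ A c σ} := by
  classical
  have hΔpos (c : ι) : 0 < Δ := (card_pos.mpr ⟨c, by simpa using hvbl c⟩).trans_le (hΔ c)
  set x : ℝ := ((Δ : ℝ) + 1)⁻¹
  have hx₀ : 0 ≤ x := by positivity
  have hx₁ (c : ι) : x < 1 := inv_lt_one_of_one_lt₀ (by have := hΔpos c; simp [this])
  have hp' (c : ι) : (#{σ ∈ piFinset U | A c σ} : ℝ) ≤ x * (1 - x) ^ (Δ - 1) * #(piFinset U) := by
    refine (hp c).trans (mul_le_mul_of_nonneg_right ?_ (Nat.cast_nonneg _))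
    calc p ≤ (Real.exp 1 * Δ)⁻¹ := by
          rw [← one_div, le_div_iff₀ (by have := hΔpos c; positivity)]
          linarith
      _ ≤ x * (1 - x) ^ (Δ - 1) := inv_exp_mul_le_inv_mul_one_sub_inv_pow (hΔpos c)
  have hpos (T : Finset ι) : 0 < #(avoiding U A T) := by
    induction T using Finset.induction_on with
    | empty =>
      simpa [avoiding, card_piFinset] using fun v => card_pos.mpr (hU v)
    | @insert c T _ ih =>
      have := one_sub_mul_card_avoiding_le hU hA hvbl hΔ hx₀ (hx₁ c).le hp' T c
      have : (0 : ℝ) < #(avoiding U A (insert c T)) :=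
        (mul_pos (sub_pos.mpr (hx₁ c)) (Nat.cast_pos.mpr ih)).trans_le this
      exact_mod_cast this
  simpa [avoiding] using hpos univ

end LovaszLocalLemma

section CSP

open Fintype

variable {V ι : Type*} {Ω Q : V → Type*} {vbl : ι → Finset V} {forb : ι → ∀ v, Ω v}

def Violates (vbl : ι → Finset V) (forb : ι → ∀ v, Ω v) (c : ι) (σ : ∀ v, Ω v) : Prop :=
  ∀ u ∈ vbl c, σ u = forb c u

instance [∀ v, DecidableEq (Ω v)] (c : ι) : DecidablePred (Violates vbl forb c) :=
  fun σ => inferInstanceAs (Decidable (∀ u ∈ vbl c, σ u = forb c u))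

def SatisfiesOn (vbl : ι → Finset V) (forb : ι → ∀ v, Ω v) (F : ι → Prop) (σ : ∀ v, Ω v) :
    Prop :=
  ∀ c, F c → ¬ Violates vbl forb c σ

theorem dependsOn_violates (c : ι) : DependsOn (Violates vbl forb c) (vbl c) := fun σ τ h =>
  propext <| forall₂_congr fun u hu => by rw [h u hu]

theorem dependsOn_satisfiesOn {F : ι → Prop} {W : Set V} (h : ∀ c, F c → ↑(vbl c) ⊆ W) :
    DependsOn (SatisfiesOn vbl forb F) W := fun σ τ hστ =>
  propext <| forall₂_congr fun c hc => by
    rw [dependsOn_violates c fun u hu => hστ u (h c hc hu)]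

theorem not_violates_iff {c : ι} {σ : ∀ v, Ω v} :
    ¬ Violates vbl forb c σ ↔ ∃ u ∈ vbl c, σ u ≠ forb c u := by
  simp [Violates]

variable [DecidableEq V]

def fiberBox [∀ v, Fintype (Ω v)] [∀ v, DecidableEq (Q v)] (π : ∀ v, Ω v → Q v) (v : V)
    (Z : ∀ u, Q u) (u : V) : Finset (Ω u) :=
  if u = v then univ else ({x | π u x = Z u} : Finset (Ω u))

variable [∀ v, Fintype (Ω v)] [∀ v, DecidableEq (Q v)] {π : ∀ v, Ω v → Q v}
  {v : V} {Z : ∀ u, Q u}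

theorem fiber_subset_fiberBox {u : V} {a : Ω u} (ha : a ∈ fiberBox π v Z u) :
    ({x | π u x = π u a} : Finset (Ω u)) ⊆ fiberBox π v Z u := by
  unfold fiberBox at ha ⊢
  split_ifs at ha ⊢ with hu
  · exact subset_univ _
  · rw [(mem_filter.mp ha).2]

theorem card_filter_eq_mul_card_fiber_le [∀ v, DecidableEq (Ω v)] (u : V) (a : Ω u) :
    #{x ∈ fiberBox π v Z u | x = a} * #{x | π u x = π u a} ≤ #(fiberBox π v Z u) := by
  rw [filter_eq']
  split_ifs with ha
  · simpa using card_le_card (fiber_subset_fiberBox ha)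
  · simp

variable [Fintype V]

theorem mem_piFinset_fiberBox {σ : ∀ v, Ω v} :
    σ ∈ piFinset (fiberBox π v Z) ↔ ∀ u, u ≠ v → π u (σ u) = Z u := by
  simp only [mem_piFinset, fiberBox]
  refine forall_congr' fun u => ?_
  by_cases hu : u = v <;> simp [hu]

theorem card_filter_forall_not_violates_pos [Fintype ι] [∀ v, DecidableEq (Ω v)]
    (hsurj : ∀ v, Function.Surjective (π v)) (hΩ : ∀ v, Nonempty (Ω v))
    (hvbl : ∀ c, (vbl c).Nonempty) {Δ : ℕ}
    (hΔ : ∀ c : ι, #{c' | (vbl c ∩ vbl c').Nonempty} ≤ Δ) {b : ℝ}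
    (hb : ∀ c : ι, ∏ v ∈ vbl c, (#{x | π v x = π v (forb c v)} : ℝ)⁻¹ ≤ b)
    (hLLL : Real.exp 1 * b * Δ ≤ 1) (v : V) (Z : ∀ u, Q u) :
    0 < #{σ ∈ piFinset (fiberBox π v Z) | ∀ c, ¬ Violates vbl forb c σ} := by
  have hbox (u : V) : (fiberBox π v Z u).Nonempty := by
    unfold fiberBox
    split_ifs
    · exact univ_nonempty
    · obtain ⟨x, hx⟩ := hsurj u (Z u)
      exact ⟨x, by simpa using hx⟩
  refine card_filter_forall_not_pos hbox dependsOn_violates hvbl hΔ (fun c => ?_) hLLL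
  set w : V → ℕ := fun u => #{x | π u x = π u (forb c u)}
  have hw : (0 : ℝ) < ∏ u ∈ vbl c, (w u : ℝ) :=
    prod_pos fun u _ => Nat.cast_pos.mpr (card_pos.mpr ⟨forb c u, by simp⟩)
  have hcount : (#{σ ∈ piFinset (fiberBox π v Z) | Violates vbl forb c σ} : ℝ) *
      ∏ u ∈ vbl c, (w u : ℝ) ≤ #(piFinset (fiberBox π v Z)) := by
    rw [filter_congr (p := Violates vbl forb c) (q := fun σ => ∀ u ∈ vbl c, σ u = forb c u)
      fun _ _ => Iff.rfl]
    exact_mod_cast card_filter_forall_eq_mul_prod_le _ _ _ w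
      fun u _ => card_filter_eq_mul_card_fiber_le u (forb c u)
  calc (#{σ ∈ piFinset (fiberBox π v Z) | Violates vbl forb c σ} : ℝ)
      ≤ (∏ u ∈ vbl c, (w u : ℝ))⁻¹ * #(piFinset (fiberBox π v Z)) := by
        rw [inv_mul_eq_div, le_div_iff₀ hw]; exact hcount
    _ ≤ b * #(piFinset (fiberBox π v Z)) := by
        gcongr
        rw [← prod_inv_distrib]
        exact hb c

theorem forall_not_violates_iff {bad : ι → Prop}
    (hZ : ∀ c, (∀ u ∈ vbl c, u ≠ v → Z u = π u (forb c u)) → bad c) (F : ι → Prop)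
    {σ : ∀ v, Ω v} (hσ : σ ∈ piFinset (fiberBox π v Z)) :
    (∀ c, ¬ Violates vbl forb c σ) ↔
      SatisfiesOn vbl forb F σ ∧ SatisfiesOn vbl forb (fun c => bad c ∧ ¬ F c) σ := by
  refine ⟨fun h => ⟨fun c _ => h c, fun c _ => h c⟩, fun ⟨hF, hbad⟩ c hc => ?_⟩
  by_cases hFc : F c
  · exact hF c hFc hc
  refine hbad c ⟨hZ c fun u hu huv => ?_, hFc⟩ hc
  rw [← hc u hu, mem_piFinset_fiberBox.mp hσ u huv]

theorem filter_fiber_eq_filter_piFinset_fiberBox [Fintype ι] [∀ v, DecidableEq (Ω v)]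
    {Sat : Finset (∀ v, Ω v)}
    (hSat : Sat = univ.filter fun σ => ∀ c, ∃ u ∈ vbl c, σ u ≠ forb c u) {bad : ι → Prop}
    (hZ : ∀ c, (∀ u ∈ vbl c, u ≠ v → Z u = π u (forb c u)) → bad c) (F : ι → Prop)
    [DecidablePred (SatisfiesOn vbl forb F)]
    [DecidablePred (SatisfiesOn vbl forb fun c => bad c ∧ ¬ F c)]
    (T : (∀ v, Ω v) → Prop) [DecidablePred T] :
    Sat.filter (fun σ => (∀ u, u ≠ v → π u (σ u) = Z u) ∧ T σ) =
      {σ ∈ piFinset (fiberBox π v Z) | (SatisfiesOn vbl forb F σ ∧ T σ) ∧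
        SatisfiesOn vbl forb (fun c => bad c ∧ ¬ F c) σ} := by
  ext σ
  have h := forall_not_violates_iff hZ F (σ := σ)
  simp only [hSat, mem_filter, mem_univ, true_and, ← not_violates_iff,
    mem_piFinset_fiberBox] at h ⊢
  tauto

end CSP

section Linked

variable {V ι : Type*} [DecidableEq V] (vbl : ι → Finset V) (bad : ι → Prop) (v : V)

def IsLinked (c : ι) : Prop :=
  bad c ∧ ∃ c₀, bad c₀ ∧ v ∈ vbl c₀ ∧ (inducedConstraintGraph vbl bad).Reachable c c₀

/-- The set `{v} ∪ K`. -/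
def linkedVars : Set V := {u | u = v ∨ ∃ c, IsLinked vbl bad v c ∧ u ∈ vbl c}

variable {vbl bad v} {Ω Q : V → Type*} {forb : ι → ∀ v, Ω v}

theorem isLinked_of_mem_linkedVars {c : ι} {u : V} (hc : bad c) (hu : u ∈ vbl c)
    (hW : u ∈ linkedVars vbl bad v) : IsLinked vbl bad v c := by
  rcases hW with rfl | ⟨c', ⟨hc', c₀, hc₀, hv₀, hr⟩, hu'⟩
  · exact ⟨hc, c, hc, hu, .refl c⟩
  · refine ⟨hc, c₀, hc₀, hv₀, ?_⟩
    by_cases h : c = c'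
    · exact h ▸ hr
    · have hadj : (inducedConstraintGraph vbl bad).Adj c c' :=
        ⟨h, hc, hc', u, mem_inter.mpr ⟨hu, hu'⟩⟩
      exact hadj.reachable.trans hr

theorem dependsOn_satisfiesOn_isLinked :
    DependsOn (SatisfiesOn vbl forb (IsLinked vbl bad v)) (linkedVars vbl bad v) :=
  dependsOn_satisfiesOn fun c hc _ hu => Or.inr ⟨c, hc, hu⟩

theorem dependsOn_satisfiesOn_isLinked_and (f : Ω v → Prop) :
    DependsOn (fun σ => SatisfiesOn vbl forb (IsLinked vbl bad v) σ ∧ f (σ v))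
      (linkedVars vbl bad v) := fun σ τ h => by
  simp only [dependsOn_satisfiesOn_isLinked h, h v (Or.inl rfl)]

theorem dependsOn_satisfiesOn_not_isLinked :
    DependsOn (SatisfiesOn vbl forb fun c => bad c ∧ ¬ IsLinked vbl bad v c)
      (linkedVars vbl bad v)ᶜ :=
  dependsOn_satisfiesOn fun _ hc _ hu hW => hc.2 (isLinked_of_mem_linkedVars hc.1 hu hW)

theorem fiberBox_eq_of_mem_linkedVars [∀ v, Fintype (Ω v)] [∀ v, DecidableEq (Q v)]
    {π : ∀ v, Ω v → Q v} {X Y : ∀ u, Q u}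
    (hXY : ∀ c, IsLinked vbl bad v c → ∀ u ∈ vbl c, u ≠ v → X u = Y u) :
    ∀ u ∈ linkedVars vbl bad v, fiberBox π v X u = fiberBox π v Y u := by
  intro u hu
  unfold fiberBox
  split_ifs with huv
  · rfl
  · obtain rfl | ⟨c, hc, hu⟩ := hu
    · exact absurd rfl huv
    · rw [hXY c hc u hu huv]

end Linked

theorem stmt_6_general {V : Type*} [Fintype V] [DecidableEq V]
    {Ω : V → Type*} [∀ v, Fintype (Ω v)] [∀ v, DecidableEq (Ω v)]
    {Q : V → Type*} [∀ v, DecidableEq (Q v)]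
    {ι : Type*} [Fintype ι]
    (vbl : ι → Finset V) (forb : ι → ∀ v, Ω v) (π : ∀ v, Ω v → Q v)
    (hsurj : ∀ v, Function.Surjective (π v))
    (Sat : Finset (∀ v, Ω v))
    (hSat : Sat = univ.filter fun σ => ∀ c, ∃ v ∈ vbl c, σ v ≠ forb c v)
    (hne : Sat.Nonempty)
    (Δ : ℕ)
    (hΔ : ∀ c : ι, ((univ : Finset ι).filter fun c' => (vbl c ∩ vbl c').Nonempty).card ≤ Δ)
    (b : ℝ)
    (hb : ∀ c : ι, ∏ v ∈ vbl c,
      (((univ : Finset (Ω v)).filter fun x => π v x = π v (forb c v)).card : ℝ)⁻¹ ≤ b)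
    (hLLL : Real.exp 1 * b * Δ ≤ 1)
    (v : V) (X Y : ∀ u, Q u)
    -- `bad = 𝒞'`: constraints not satisfied by at least one of `X^{-v}` and `Y^{-v}`
    (bad : ι → Prop)
    (hbad : ∀ c, bad c ↔ ((∀ u ∈ vbl c, u ≠ v → X u = π u (forb c u)) ∨
                          (∀ u ∈ vbl c, u ≠ v → Y u = π u (forb c u))))
    -- `X` and `Y` agree off `v` on `K`, the union of the variable sets of the constraints of
    -- `𝒞'` whose component in `G'` contains a constraint whose variable set contains `v`
    (hXY : ∀ u : V, (∃ c, bad c ∧ u ∈ vbl c ∧ ∃ c₀, bad c₀ ∧ v ∈ vbl c₀ ∧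
        (inducedConstraintGraph vbl bad).Reachable c c₀) → u ≠ v → X u = Y u) :
    0 < (Sat.filter fun σ => ∀ u, u ≠ v → π u (σ u) = X u).card ∧
    0 < (Sat.filter fun σ => ∀ u, u ≠ v → π u (σ u) = Y u).card ∧
    ∀ y : Q v,
      ((Sat.filter fun σ => (∀ u, u ≠ v → π u (σ u) = X u) ∧ π v (σ v) = y).card : ℝ) /
          ((Sat.filter fun σ => ∀ u, u ≠ v → π u (σ u) = X u).card : ℝ) =
        ((Sat.filter fun σ => (∀ u, u ≠ v → π u (σ u) = Y u) ∧ π v (σ v) = y).card : ℝ) /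
          ((Sat.filter fun σ => ∀ u, u ≠ v → π u (σ u) = Y u).card : ℝ) := by
  classical
  obtain ⟨σ₀, hσ₀⟩ := hne
  rw [hSat, mem_filter] at hσ₀
  have hvbl (c : ι) : (vbl c).Nonempty := (hσ₀.2 c).imp fun _ => And.left
  set P := SatisfiesOn vbl forb (IsLinked vbl bad v)
  set R := SatisfiesOn vbl forb fun c => bad c ∧ ¬ IsLinked vbl bad v c
  have hpos (Z : ∀ u, Q u) (hZ : ∀ c, (∀ u ∈ vbl c, u ≠ v → Z u = π u (forb c u)) → bad c) :
      0 < #{σ ∈ Fintype.piFinset (fiberBox π v Z) | P σ ∧ R σ} := by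
    rw [← filter_congr fun σ hσ => forall_not_violates_iff hZ _ hσ]
    exact card_filter_forall_not_violates_pos hsurj (fun u => ⟨σ₀ u⟩) hvbl hΔ hb hLLL v Z
  have hfiber (Z : ∀ u, Q u) (hZ : ∀ c, (∀ u ∈ vbl c, u ≠ v → Z u = π u (forb c u)) → bad c) :
      Sat.filter (fun σ => ∀ u, u ≠ v → π u (σ u) = Z u) =
        {σ ∈ Fintype.piFinset (fiberBox π v Z) | P σ ∧ R σ} := by
    simpa using filter_fiber_eq_filter_piFinset_fiberBox hSat hZ _ fun _ => True
  have hX c (h : ∀ u ∈ vbl c, u ≠ v → X u = π u (forb c u)) : bad c := (hbad c).mpr (.inl h)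
  have hY c (h : ∀ u ∈ vbl c, u ≠ v → Y u = π u (forb c u)) : bad c := (hbad c).mpr (.inr h)
  refine ⟨hfiber X hX ▸ hpos X hX, hfiber Y hY ▸ hpos Y hY, fun y => ?_⟩
  rw [filter_fiber_eq_filter_piFinset_fiberBox hSat hX _ (fun σ => π v (σ v) = y),
    filter_fiber_eq_filter_piFinset_fiberBox hSat hY _ (fun σ => π v (σ v) = y),
    hfiber X hX, hfiber Y hY]
  exact card_filter_and_div_card_filter_and_eq_of_eqOn
    (fiberBox_eq_of_mem_linkedVars fun c ⟨hc, hl⟩ u hu => hXY u ⟨c, hc, hu, hl⟩)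
    (dependsOn_satisfiesOn_isLinked_and (π v · = y)) dependsOn_satisfiesOn_isLinked
    dependsOn_satisfiesOn_not_isLinked (hpos X hX) (hpos Y hY)

/-- **The conditional marginal at `v` depends only on the relevant connected component of
failed constraints.**  `Φ` is an atomic CSP with degree `Δ`, `π` a (surjective) projection
scheme with `e·b·Δ ≤ 1` (so all conditional distributions `μ_π[value(v) = · | Y^{-v}]` are well
defined).  Fix `v` and projected assignments `X, Y`; `bad` is the set `𝒞'` of constraints not
satisfied by at least one of `X^{-v}` and `Y^{-v}`; `G'` is the subgraph of `G(𝒞)` induced on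
`𝒞'`, and `K` is the union of `vbl C` over `C ∈ 𝒞'` lying in a connected component of `G'`
containing a constraint whose variable set contains `v`.  If `X` and `Y` agree on `K \ {v}`,
then `μ_π[value(v) = · | X^{-v}] = μ_π[value(v) = · | Y^{-v}]` (both being well defined). -/
theorem stmt_6 {V : Type*} [Fintype V] [DecidableEq V]
    {Ω : V → Type*} [∀ v, Fintype (Ω v)] [∀ v, DecidableEq (Ω v)]
    (hΩ : ∀ v, 2 ≤ Fintype.card (Ω v))
    {Q : V → Type*} [∀ v, Fintype (Q v)] [∀ v, DecidableEq (Q v)]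
    (hQ : ∀ v, 1 ≤ Fintype.card (Q v))
    {ι : Type*} [Fintype ι]
    (vbl : ι → Finset V) (forb : ι → ∀ v, Ω v) (π : ∀ v, Ω v → Q v)
    (hsurj : ∀ v, Function.Surjective (π v))
    (Sat : Finset (∀ v, Ω v))
    (hSat : Sat = univ.filter fun σ => ∀ c, ∃ v ∈ vbl c, σ v ≠ forb c v)
    (hne : Sat.Nonempty)
    (Δ : ℕ)
    (hΔ : ∀ c : ι, ((univ : Finset ι).filter fun c' => (vbl c ∩ vbl c').Nonempty).card ≤ Δ)
    (b : ℝ)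
    (hb : ∀ c : ι, ∏ v ∈ vbl c,
      (((univ : Finset (Ω v)).filter fun x => π v x = π v (forb c v)).card : ℝ)⁻¹ ≤ b)
    (hLLL : Real.exp 1 * b * Δ ≤ 1)
    (v : V) (X Y : ∀ u, Q u)
    -- `bad = 𝒞'`: constraints not satisfied by at least one of `X^{-v}` and `Y^{-v}`
    (bad : ι → Prop)
    (hbad : ∀ c, bad c ↔ ((∀ u ∈ vbl c, u ≠ v → X u = π u (forb c u)) ∨
                          (∀ u ∈ vbl c, u ≠ v → Y u = π u (forb c u))))
    -- `X` and `Y` agree off `v` on `K`, the union of the variable sets of the constraints of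
    -- `𝒞'` whose component in `G'` contains a constraint whose variable set contains `v`
    (hXY : ∀ u : V, (∃ c, bad c ∧ u ∈ vbl c ∧ ∃ c₀, bad c₀ ∧ v ∈ vbl c₀ ∧
        (inducedConstraintGraph vbl bad).Reachable c c₀) → u ≠ v → X u = Y u) :
    0 < (Sat.filter fun σ => ∀ u, u ≠ v → π u (σ u) = X u).card ∧
    0 < (Sat.filter fun σ => ∀ u, u ≠ v → π u (σ u) = Y u).card ∧
    ∀ y : Q v,
      ((Sat.filter fun σ => (∀ u, u ≠ v → π u (σ u) = X u) ∧ π v (σ v) = y).card : ℝ) /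
          ((Sat.filter fun σ => ∀ u, u ≠ v → π u (σ u) = X u).card : ℝ) =
        ((Sat.filter fun σ => (∀ u, u ≠ v → π u (σ u) = Y u) ∧ π v (σ v) = y).card : ℝ) /
          ((Sat.filter fun σ => ∀ u, u ≠ v → π u (σ u) = Y u).card : ℝ) :=
  stmt_6_general vbl forb π hsurj Sat hSat hne Δ hΔ b hb hLLL v X Y bad hbad hXY
end

section
/- There exist real numbers α, θ₁, θ_f ∈ (0,1) and γ ≥ 0.1742 such that γ ≤ θ₁ < α, 2γ ≤ θ_f < 1 − α, D(θ₁, α) ≥ γ·log 2, and D(θ_f, 1 − α) ≥ γ·log 2. -/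
/-- The Kullback–Leibler divergence `D(x,y)` between `Bernoulli(x)` and `Bernoulli(y)`. -/
noncomputable def klBern (x y : ℝ) : ℝ :=
  x * Real.log (x / y) + (1 - x) * Real.log ((1 - x) / (1 - y))

/-!
Take `γ = θ₁ = 0.1742`, `θ_f = 2γ` and `α = 0.405`. Both divergences exceed `γ log 2` by about
`0.003`, so lower bounds on the four logarithms accurate to a few thousandths suffice; they come from
`(1 - b/n)^n ≤ e^{-b}` with `n` a few hundred, a purely rational inequality.
-/

open Real

lemma le_log_of_one_le_one_sub_div_pow_mul {q b : ℝ} {n : ℕ} (hn : 0 < n) (hb : b / n < 1)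
    (h : 1 ≤ (1 - b / n) ^ n * q) : b ≤ log q := by
  have hbase : 0 < 1 - b / n := by linarith
  have hq : 0 < q := pos_of_mul_pos_right (one_pos.trans_le h) (pow_pos hbase n).le
  have hlog : 0 ≤ n * log (1 - b / n) + log q := by
    rw [← log_pow, ← log_mul (pow_pos hbase n).ne' hq.ne']
    exact log_nonneg h
  calc b = n * (b / n) := by field_simp
    _ ≤ n * -log (1 - b / n) := by
        gcongr
        linarith [log_le_sub_one_of_pos hbase]
    _ ≤ log q := by linarith

/-- **Feasibility of the optimization problem for Boolean alphabets (Case 2 of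
Proposition 3.5).**  There exist `α, θ₁, θ_f ∈ (0,1)` and `γ ≥ 0.1742` with `γ ≤ θ₁ < α`,
`2γ ≤ θ_f < 1 - α`, `D(θ₁, α) ≥ γ·log 2` and `D(θ_f, 1-α) ≥ γ·log 2`. -/
theorem stmt_8 :
    ∃ α θ₁ θf γ : ℝ,
      α ∈ Set.Ioo (0 : ℝ) 1 ∧ θ₁ ∈ Set.Ioo (0 : ℝ) 1 ∧ θf ∈ Set.Ioo (0 : ℝ) 1 ∧
      0.1742 ≤ γ ∧
      γ ≤ θ₁ ∧ θ₁ < α ∧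
      2 * γ ≤ θf ∧ θf < 1 - α ∧
      γ * Real.log 2 ≤ klBern θ₁ α ∧
      γ * Real.log 2 ≤ klBern θf (1 - α) := by
  refine ⟨0.405, 0.1742, 0.3484, 0.1742, ⟨by norm_num, by norm_num⟩,
    ⟨by norm_num, by norm_num⟩, ⟨by norm_num, by norm_num⟩,
    le_rfl, le_rfl, by norm_num, by norm_num, by norm_num, ?_, ?_⟩
  all_goals have hlog2 := log_two_lt_d9
  · have h₁ : -0.846 ≤ log (0.1742 / 0.405) :=
      le_log_of_one_le_one_sub_div_pow_mul (n := 256) (by norm_num) (by norm_num) (by norm_num)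
    have h₂ : 0.3270 ≤ log ((1 - 0.1742) / (1 - 0.405)) :=
      le_log_of_one_le_one_sub_div_pow_mul (n := 128) (by norm_num) (by norm_num) (by norm_num)
    unfold klBern
    linarith
  · have h₁ : -0.5360 ≤ log (0.3484 / (1 - 0.405)) :=
      le_log_of_one_le_one_sub_div_pow_mul (n := 256) (by norm_num) (by norm_num) (by norm_num)
    have h₂ : 0.4740 ≤ log ((1 - 0.3484) / (1 - (1 - 0.405))) :=
      le_log_of_one_le_one_sub_div_pow_mul (n := 128) (by norm_num) (by norm_num) (by norm_num)
    unfold klBern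
    linarith
end

section
/- Let V be a finite set and let 𝒞 be a finite family of constraints, each constraint C having a variable set vbl(C) ⊆ V with |vbl(C)| = k, such that each constraint shares a variable with at most Δ constraints in total (including itself). Let θ₁, θ_f, α ∈ (0,1) with θ₁ < α and θ_f < 1 − α satisfy max(e^{−D(θ₁,α)·k}, e^{−D(θ_f,1−α)·k}) < (2eΔ)^{-1}. Then there exists a subset V₁ ⊆ V such that for every C ∈ 𝒞, |V₁ ∩ vbl(C)| ≥ θ₁·k and |vbl(C) ∖ V₁| ≥ θ_f·k. -/
/-!
Mark every variable independently with probability `α`, and call a constraint `C` bad when fewer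
than `θ₁ k` of its variables are marked or fewer than `θ_f k` are unmarked. The number of marked
variables of `C` is binomial, so by the Chernoff bound the two failures have probabilities at most
`e^{-D(θ₁,α) k}` and `e^{-D(θ_f,1-α) k}`, and a bad event has probability `p < (eΔ)⁻¹`. The bad
event of `C` is determined by the marks on `vbl C`, hence independent of the bad events of all
constraints sharing no variable with `C`; the symmetric Lovász Local Lemma (`e p Δ < 1`) then gives
a marking under which no constraint is bad.
-/

open Finset

open Real

section LocalLemma

variable {Ω ι : Type*} [Fintype Ω] [DecidableEq Ω]
  {w : Ω → ℝ} {A : ι → Finset Ω} {x : ι → ℝ} {N : ι → Finset ι}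

def avoid (A : ι → Finset Ω) (S : Finset ι) : Finset Ω := {ω | ∀ i ∈ S, ω ∉ A i}

lemma mem_avoid {S : Finset ι} {ω : Ω} : ω ∈ avoid A S ↔ ∀ i ∈ S, ω ∉ A i := by
  simp [avoid]

lemma avoid_anti {S T : Finset ι} (h : S ⊆ T) : avoid A T ⊆ avoid A S :=
  fun _ hω => mem_avoid.2 fun i hi => mem_avoid.1 hω i (h hi)

lemma avoid_empty : avoid A ∅ = univ := by simp [avoid]

variable [DecidableEq ι]

lemma sum_avoid_insert (j : ι) (S : Finset ι) :
    ∑ ω ∈ avoid A (insert j S), w ω =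
      ∑ ω ∈ avoid A S, w ω - ∑ ω ∈ A j ∩ avoid A S, w ω := by
  have h : avoid A (insert j S) = avoid A S \ A j := by
    ext ω
    simp only [mem_avoid, forall_mem_insert, mem_sdiff]
    tauto
  rw [h, ← sum_inter_add_sum_sdiff (avoid A S) (A j), inter_comm]
  ring

lemma prod_one_sub_mul_sum_avoid_le (U R : Finset ι) (hx : ∀ j ∈ R, x j ≤ 1)
    (hcond : ∀ T ⊆ R, ∀ j ∈ R, j ∉ T →
      ∑ ω ∈ A j ∩ avoid A (U ∪ T), w ω ≤ x j * ∑ ω ∈ avoid A (U ∪ T), w ω) :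
    (∏ j ∈ R, (1 - x j)) * ∑ ω ∈ avoid A U, w ω ≤ ∑ ω ∈ avoid A (U ∪ R), w ω := by
  induction R using Finset.induction_on with
  | empty => simp
  | insert j R hjR ih =>
    have hR := ih (fun i hi => hx i (mem_insert_of_mem hi))
      fun T hT i hi => hcond T (hT.trans (subset_insert j R)) i (mem_insert_of_mem hi)
    have hj := hcond R (subset_insert j R) j (mem_insert_self j R) hjR
    have hxj : 0 ≤ 1 - x j := sub_nonneg.2 (hx j (mem_insert_self j R))
    rw [prod_insert hjR, union_insert, sum_avoid_insert, mul_assoc]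
    nlinarith [mul_le_mul_of_nonneg_left hR hxj]

-- `A i` is independent of avoiding `S \ N i`, and also avoiding `S ∩ N i ⊆ (N i).erase i` costs
-- at most the factor `∏ (1 - x j)`, by the induction hypothesis.
theorem sum_inter_avoid_le (hw : ∀ ω, 0 ≤ w ω) (hx0 : ∀ i, 0 ≤ x i) (hx1 : ∀ i, x i ≤ 1)
    (hind : ∀ i S, Disjoint S (N i) →
      ∑ ω ∈ A i ∩ avoid A S, w ω = (∑ ω ∈ A i, w ω) * ∑ ω ∈ avoid A S, w ω)
    (hbound : ∀ i, ∑ ω ∈ A i, w ω ≤ x i * ∏ j ∈ (N i).erase i, (1 - x j))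
    (S : Finset ι) {i : ι} (hi : i ∉ S) :
    ∑ ω ∈ A i ∩ avoid A S, w ω ≤ x i * ∑ ω ∈ avoid A S, w ω := by
  induction S using Finset.strongInduction generalizing i with
  | H S ih =>
  have hS : S \ N i ∪ S ∩ N i = S := sdiff_union_inter S (N i)
  have hnear : S ∩ N i ⊆ (N i).erase i := fun j hj =>
    mem_erase.2 ⟨fun h => hi (h ▸ (mem_inter.1 hj).1), (mem_inter.1 hj).2⟩
  have hchain := prod_one_sub_mul_sum_avoid_le (w := w) (A := A) (S \ N i) (S ∩ N i)
    (fun j _ => hx1 j) fun T hT j hj hjT => ih _ (by grind) (by grind)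
  have havoid : 0 ≤ ∑ ω ∈ avoid A (S \ N i), w ω := sum_nonneg fun ω _ => hw ω
  calc ∑ ω ∈ A i ∩ avoid A S, w ω
      ≤ ∑ ω ∈ A i ∩ avoid A (S \ N i), w ω :=
        sum_le_sum_of_subset_of_nonneg (inter_subset_inter_left (avoid_anti sdiff_subset))
          fun ω _ _ => hw ω
    _ = (∑ ω ∈ A i, w ω) * ∑ ω ∈ avoid A (S \ N i), w ω := hind i _ sdiff_disjoint
    _ ≤ x i * (∏ j ∈ (N i).erase i, (1 - x j)) * ∑ ω ∈ avoid A (S \ N i), w ω := by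
        gcongr; exact hbound i
    _ ≤ x i * (∏ j ∈ S ∩ N i, (1 - x j)) * ∑ ω ∈ avoid A (S \ N i), w ω := by
        refine mul_le_mul_of_nonneg_right (mul_le_mul_of_nonneg_left ?_ (hx0 i)) havoid
        exact prod_le_prod_of_subset_of_le_one hnear (fun j _ => sub_nonneg.2 (hx1 j))
          fun j _ _ => sub_le_self _ (hx0 j)
    _ ≤ x i * ∑ ω ∈ avoid A (S \ N i ∪ S ∩ N i), w ω := by
        rw [mul_assoc]
        exact mul_le_mul_of_nonneg_left hchain (hx0 i)
    _ = x i * ∑ ω ∈ avoid A S, w ω := by rw [hS]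

theorem exists_forall_notMem_of_lll [Fintype ι] (hw : ∀ ω, 0 ≤ w ω) (hx0 : ∀ i, 0 ≤ x i)
    (hx1 : ∀ i, x i < 1)
    (hind : ∀ i S, Disjoint S (N i) →
      ∑ ω ∈ A i ∩ avoid A S, w ω = (∑ ω ∈ A i, w ω) * ∑ ω ∈ avoid A S, w ω)
    (hbound : ∀ i, ∑ ω ∈ A i, w ω ≤ x i * ∏ j ∈ (N i).erase i, (1 - x j))
    (htot : 0 < ∑ ω, w ω) :
    ∃ ω, ∀ i, ω ∉ A i := by
  have hchain := prod_one_sub_mul_sum_avoid_le (w := w) (A := A) ∅ univ (fun j _ => (hx1 j).le)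
    fun T _ j _ hjT => sum_inter_avoid_le hw hx0 (fun j => (hx1 j).le) hind hbound _ (by simpa)
  have hprod : 0 < ∏ j, (1 - x j) := prod_pos fun j _ => sub_pos.2 (hx1 j)
  rw [empty_union, avoid_empty] at hchain
  have hpos : 0 < ∑ ω ∈ avoid A univ, w ω := (mul_pos hprod htot).trans_le hchain
  obtain ⟨ω, hω, -⟩ := exists_ne_zero_of_sum_ne_zero hpos.ne'
  exact ⟨ω, fun i => mem_avoid.1 hω i (mem_univ i)⟩

lemma exp_neg_one_le_one_sub_pow {t : ℝ} {m : ℕ} (ht : (m + 1) * t < 1) :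
    exp (-1) ≤ (1 - t) ^ m := by
  have ht1 : 0 < 1 - t := by nlinarith [m.cast_nonneg (α := ℝ)]
  have hlog : exp (-(t / (1 - t))) ≤ 1 - t := by
    rw [exp_neg, inv_le_comm₀ (exp_pos _) ht1]
    calc (1 - t)⁻¹ = t / (1 - t) + 1 := by field_simp; ring
      _ ≤ exp (t / (1 - t)) := add_one_le_exp _
  calc exp (-1) ≤ exp (-(t / (1 - t))) ^ m := by
        rw [← exp_nat_mul, exp_le_exp, mul_neg, neg_le_neg_iff, mul_div_assoc', div_le_one ht1]
        linarith
    _ ≤ (1 - t) ^ m := pow_le_pow_left₀ (exp_pos _).le hlog m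

theorem exists_forall_notMem_of_lll_symm [Fintype ι] {D : ℕ} {p : ℝ} (hw : ∀ ω, 0 ≤ w ω)
    (hN : ∀ i, i ∈ N i) (hD : ∀ i, #(N i) ≤ D)
    (hind : ∀ i S, Disjoint S (N i) →
      ∑ ω ∈ A i ∩ avoid A S, w ω = (∑ ω ∈ A i, w ω) * ∑ ω ∈ avoid A S, w ω)
    (hp : ∀ i, ∑ ω ∈ A i, w ω ≤ p) (hpD : exp 1 * p * D < 1) (htot : 0 < ∑ ω, w ω) :
    ∃ ω, ∀ i, ω ∉ A i := by
  have hx0 : ∀ i, 0 ≤ exp 1 * p := fun i =>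
    mul_nonneg (exp_pos 1).le ((sum_nonneg fun ω _ => hw ω).trans (hp i))
  have hsmall : ∀ i, (#((N i).erase i) + 1) * (exp 1 * p) < 1 := fun i => by
    rw [← Nat.cast_add_one, card_erase_add_one (hN i)]
    calc (#(N i) : ℝ) * (exp 1 * p) ≤ D * (exp 1 * p) :=
          mul_le_mul_of_nonneg_right (by exact_mod_cast hD i) (hx0 i)
      _ < 1 := by linarith
  refine exists_forall_notMem_of_lll (x := fun _ => exp 1 * p) hw hx0 (fun i => ?_) hind
    (fun i => ?_) htot
  · exact (le_mul_of_one_le_left (hx0 i) (by simp)).trans_lt (hsmall i)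
  · calc ∑ ω ∈ A i, w ω ≤ exp 1 * p * exp (-1) :=
          (hp i).trans_eq (by rw [mul_right_comm, ← exp_add, add_neg_cancel, exp_zero, one_mul])
      _ ≤ exp 1 * p * ∏ j ∈ (N i).erase i, (1 - exp 1 * p) := by
          rw [prod_const]
          exact mul_le_mul_of_nonneg_left (exp_neg_one_le_one_sub_pow (hsmall i)) (hx0 i)

end LocalLemma

lemma exp_neg_klBern {θ p : ℝ} (hθ0 : 0 < θ) (hθ1 : θ < 1) (hp0 : 0 < p) (hp1 : p < 1) :
    exp (-klBern θ p) = (1 - p) / (1 - θ) * (p * (1 - θ) / (θ * (1 - p))) ^ θ := by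
  have h1p : 0 < 1 - p := sub_pos.2 hp1
  have h1θ : 0 < 1 - θ := sub_pos.2 hθ1
  rw [rpow_def_of_pos (by positivity), ← exp_log (x := (1 - p) / (1 - θ)) (by positivity),
    ← exp_add, klBern]
  congr 1
  simp only [log_div, log_mul, hθ0.ne', hp0.ne', h1p.ne', h1θ.ne', ne_eq, mul_eq_zero,
    not_false_eq_true, or_self]
  ring

section Bernoulli

variable {V : Type*} [DecidableEq V]

lemma union_inter_eq_left_of_disjoint {s t a b : Finset V} (h : Disjoint s t) (ha : a ⊆ s)
    (hb : b ⊆ t) : (a ∪ b) ∩ s = a := by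
  rw [disjoint_left] at h
  grind

lemma union_inter_eq_right_of_disjoint {s t a b : Finset V} (h : Disjoint s t) (ha : a ⊆ s)
    (hb : b ⊆ t) : (a ∪ b) ∩ t = b := by
  rw [disjoint_left] at h
  grind

theorem Finset.sum_powerset_union_of_disjoint {M : Type*} [AddCommMonoid M] {s t : Finset V}
    (h : Disjoint s t) (f : Finset V → M) :
    ∑ u ∈ (s ∪ t).powerset, f u = ∑ a ∈ s.powerset, ∑ b ∈ t.powerset, f (a ∪ b) := by
  rw [← sum_product']
  refine sum_nbij' (fun u => (u ∩ s, u ∩ t)) (fun ab => ab.1 ∪ ab.2) ?_ ?_ ?_ ?_ ?_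
  · intro u _; simp
  · intro ab hab
    simp only [mem_product, mem_powerset] at hab ⊢
    exact union_subset_union hab.1 hab.2
  · intro u hu
    simp only [mem_powerset] at hu
    rw [← inter_union_distrib_left, inter_eq_left.2 hu]
  · intro ab hab
    simp only [mem_product, mem_powerset] at hab
    rw [union_inter_eq_left_of_disjoint h hab.1 hab.2,
      union_inter_eq_right_of_disjoint h hab.1 hab.2]
  · intro u hu
    simp only [mem_powerset] at hu
    rw [← inter_union_distrib_left, inter_eq_left.2 hu]

lemma sum_pow_card_mul_pow_card_sdiff {R : Type*} [CommSemiring R] (a b : R) (U : Finset V) :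
    ∑ A ∈ U.powerset, a ^ #A * b ^ #(U \ A) = (a + b) ^ #U := by
  simpa only [prod_const] using (prod_add (fun _ => a) (fun _ => b) U).symm

def bernWeight (p : ℝ) (U A : Finset V) : ℝ := p ^ #A * (1 - p) ^ #(U \ A)

variable {p : ℝ}

lemma bernWeight_nonneg (hp0 : 0 ≤ p) (hp1 : p ≤ 1) (U A : Finset V) : 0 ≤ bernWeight p U A :=
  mul_nonneg (pow_nonneg hp0 _) (pow_nonneg (sub_nonneg.2 hp1) _)

lemma sum_bernWeight (U : Finset V) : ∑ A ∈ U.powerset, bernWeight p U A = 1 := by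
  simp [bernWeight, sum_pow_card_mul_pow_card_sdiff]

lemma bernWeight_one_sub_sdiff {U A : Finset V} (h : A ⊆ U) :
    bernWeight (1 - p) U (U \ A) = bernWeight p U A := by
  rw [bernWeight, bernWeight, Finset.sdiff_sdiff_eq_self h, sub_sub_cancel, mul_comm]

lemma bernWeight_union {s t a b : Finset V} (h : Disjoint s t) (ha : a ⊆ s) (hb : b ⊆ t) :
    bernWeight p (s ∪ t) (a ∪ b) = bernWeight p s a * bernWeight p t b := by
  have hsdiff : (s ∪ t) \ (a ∪ b) = (s \ a) ∪ (t \ b) := by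
    rw [disjoint_left] at h
    grind
  rw [bernWeight, bernWeight, bernWeight, hsdiff,
    card_union_of_disjoint (disjoint_of_subset_left ha (disjoint_of_subset_right hb h)),
    card_union_of_disjoint (disjoint_of_subset_left sdiff_subset
      (disjoint_of_subset_right sdiff_subset h)), pow_add, pow_add]
  ring

lemma sum_bernWeight_mul {s t : Finset V} (h : Disjoint s t) (f g : Finset V → ℝ) :
    ∑ u ∈ (s ∪ t).powerset, bernWeight p (s ∪ t) u * (f (u ∩ s) * g (u ∩ t)) =
      (∑ a ∈ s.powerset, bernWeight p s a * f a) * ∑ b ∈ t.powerset, bernWeight p t b * g b := by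
  rw [sum_powerset_union_of_disjoint h, sum_mul_sum]
  refine sum_congr rfl fun a ha => sum_congr rfl fun b hb => ?_
  rw [mem_powerset] at ha hb
  rw [union_inter_eq_left_of_disjoint h ha hb, union_inter_eq_right_of_disjoint h ha hb,
    bernWeight_union h ha hb]
  ring

theorem sum_bernWeight_card_lt_le {U : Finset V} {θ : ℝ}
    (hθ0 : 0 < θ) (hθp : θ < p) (hp1 : p < 1) :
    ∑ A ∈ U.powerset with (#A : ℝ) < θ * #U, bernWeight p U A ≤ exp (-klBern θ p * #U) := by
  have hp0 : 0 < p := hθ0.trans hθp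
  have h1p : 0 < 1 - p := sub_pos.2 hp1
  have h1θ : 0 < 1 - θ := by linarith
  -- `r = e^t` for the optimal exponential tilt `t`
  set r := p * (1 - θ) / (θ * (1 - p)) with hr_def
  clear_value r
  have hr : 1 ≤ r := by
    rw [hr_def, le_div_iff₀ (by positivity)]
    nlinarith
  have hr0 : 0 < r := by positivity
  have hterm : ∀ A : Finset V, (#A : ℝ) < θ * #U →
      bernWeight p U A ≤ (p / r) ^ #A * (1 - p) ^ #(U \ A) * r ^ (θ * #U) := by
    intro A hA
    have hexp : 1 ≤ r ^ (θ * #U - #A) := one_le_rpow hr (by linarith)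
    calc bernWeight p U A = p ^ #A * (1 - p) ^ #(U \ A) * 1 := by rw [bernWeight, mul_one]
      _ ≤ p ^ #A * (1 - p) ^ #(U \ A) * r ^ (θ * #U - #A) :=
          mul_le_mul_of_nonneg_left hexp (by positivity)
      _ = (p / r) ^ #A * (1 - p) ^ #(U \ A) * r ^ (θ * #U) := by
          rw [rpow_sub hr0, rpow_natCast, div_pow]
          ring
  have hfrac : p / r + (1 - p) = (1 - p) / (1 - θ) := by
    rw [hr_def]
    field_simp
    ring
  calc ∑ A ∈ U.powerset with (#A : ℝ) < θ * #U, bernWeight p U A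
      ≤ ∑ A ∈ U.powerset with (#A : ℝ) < θ * #U, (p / r) ^ #A * (1 - p) ^ #(U \ A) * r ^ (θ * #U) :=
        sum_le_sum fun A hA => hterm A (mem_filter.1 hA).2
    _ ≤ ∑ A ∈ U.powerset, (p / r) ^ #A * (1 - p) ^ #(U \ A) * r ^ (θ * #U) :=
        sum_le_sum_of_subset_of_nonneg (filter_subset _ _) fun _ _ _ => by positivity
    _ = ((1 - p) / (1 - θ) * r ^ θ) ^ #U := by
        rw [← sum_mul, sum_pow_card_mul_pow_card_sdiff, hfrac, mul_pow, rpow_mul_natCast hr0.le]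
    _ = exp (-klBern θ p * #U) := by
        rw [hr_def, ← exp_neg_klBern hθ0 (by linarith) hp0 hp1, ← exp_nat_mul, mul_comm]

theorem sum_bernWeight_card_sdiff_lt_le {U : Finset V} {θ : ℝ}
    (hθ0 : 0 < θ) (hθp : θ < 1 - p) (hp0 : 0 < p) :
    ∑ A ∈ U.powerset with (#(U \ A) : ℝ) < θ * #U, bernWeight p U A ≤
      exp (-klBern θ (1 - p) * #U) := by
  have hcompl : ∑ A ∈ U.powerset with (#(U \ A) : ℝ) < θ * #U, bernWeight p U A =
      ∑ B ∈ U.powerset with (#B : ℝ) < θ * #U, bernWeight (1 - p) U B := by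
    refine sum_nbij' (U \ ·) (U \ ·) (by simp_all) (by simp_all) (by simp_all) (by simp_all)
      fun A hA => (bernWeight_one_sub_sdiff (mem_powerset.1 (mem_filter.1 hA).1)).symm
  rw [hcompl]
  exact sum_bernWeight_card_lt_le hθ0 hθp (by linarith)

variable [Fintype V] (T : Finset V)

lemma sum_bernWeight_univ_mul (f g : Finset V → ℝ) :
    ∑ u, bernWeight p univ u * (f (u ∩ T) * g (u \ T)) =
      (∑ a ∈ T.powerset, bernWeight p T a * f a) * ∑ b ∈ Tᶜ.powerset, bernWeight p Tᶜ b * g b := by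
  rw [← sum_bernWeight_mul disjoint_compl_right, union_compl, powerset_univ]
  simp only [sdiff_eq_inter_compl]

lemma sum_bernWeight_filter_and (P Q : Finset V → Prop) [DecidablePred P] [DecidablePred Q] :
    ∑ u with P (u ∩ T) ∧ Q (u \ T), bernWeight p univ u =
      (∑ a ∈ T.powerset with P a, bernWeight p T a) *
        ∑ b ∈ Tᶜ.powerset with Q b, bernWeight p Tᶜ b := by
  have h := sum_bernWeight_univ_mul (p := p) T (fun a => if P a then 1 else 0)
    (fun b => if Q b then 1 else 0)
  simp only [ite_zero_mul_ite_zero, mul_one] at h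
  simpa only [sum_filter, mul_boole] using h

lemma sum_bernWeight_filter_inter (P : Finset V → Prop) [DecidablePred P] :
    ∑ u with P (u ∩ T), bernWeight p univ u = ∑ a ∈ T.powerset with P a, bernWeight p T a := by
  simpa [sum_bernWeight] using sum_bernWeight_filter_and (p := p) T P (fun _ => True)

theorem sum_bernWeight_card_inter_lt_or_card_sdiff_lt_le {θ₁ θf : ℝ} (hθ₁ : 0 < θ₁)
    (hθf : 0 < θf) (h1 : θ₁ < p) (h2 : θf < 1 - p) :
    ∑ u with (#(u ∩ T) : ℝ) < θ₁ * #T ∨ (#(T \ u) : ℝ) < θf * #T, bernWeight p univ u ≤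
      exp (-klBern θ₁ p * #T) + exp (-klBern θf (1 - p) * #T) := by
  have hmarked := sum_bernWeight_filter_inter (p := p) T fun a => (#a : ℝ) < θ₁ * #T
  have hunmarked := sum_bernWeight_filter_inter (p := p) T fun a => (#(T \ a) : ℝ) < θf * #T
  simp only [sdiff_inter_self_right] at hunmarked
  rw [filter_or]
  calc _ ≤ _ := le_add_of_nonneg_right (sum_nonneg fun u _ =>
          bernWeight_nonneg (hθ₁.trans h1).le (by linarith) univ u)
    _ = _ := sum_union_inter
    _ ≤ _ := by
      rw [hmarked, hunmarked]
      exact add_le_add (sum_bernWeight_card_lt_le hθ₁ h1 (by linarith))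
        (sum_bernWeight_card_sdiff_lt_le hθf h2 (hθ₁.trans h1))

lemma sum_bernWeight_inter {E F : Finset (Finset V)} (hE : ∀ u, u ∈ E ↔ u ∩ T ∈ E)
    (hF : ∀ u, u ∈ F ↔ u \ T ∈ F) :
    ∑ u ∈ E ∩ F, bernWeight p univ u =
      (∑ u ∈ E, bernWeight p univ u) * ∑ u ∈ F, bernWeight p univ u := by
  have hEF := sum_bernWeight_filter_and (p := p) T (· ∈ E) (· ∈ F)
  have hE' := sum_bernWeight_filter_and (p := p) T (· ∈ E) (fun _ => True)
  have hF' := sum_bernWeight_filter_and (p := p) T (fun _ => True) (· ∈ F)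
  simp only [← hE, ← hF, and_true, true_and, filter_true, sum_bernWeight, mul_one, one_mul,
    filter_and, filter_mem_eq_inter, univ_inter] at hEF hE' hF'
  rw [hEF, hE', hF']

theorem exists_forall_notMem_of_lll_bernoulli {ι : Type*} [Fintype ι] [DecidableEq ι]
    {α p : ℝ} {Δ : ℕ}
    (vbl : ι → Finset V) (A : ι → Finset (Finset V)) (hα0 : 0 ≤ α) (hα1 : α ≤ 1)
    (hloc : ∀ i u, u ∈ A i ↔ u ∩ vbl i ∈ A i) (hne : ∀ i, (vbl i).Nonempty)
    (hΔ : ∀ i, #{j | (vbl i ∩ vbl j).Nonempty} ≤ Δ)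
    (hp : ∀ i, ∑ u ∈ A i, bernWeight α univ u ≤ p) (hpΔ : exp 1 * p * Δ < 1) :
    ∃ V₁, ∀ i, V₁ ∉ A i := by
  refine exists_forall_notMem_of_lll_symm (N := fun i => {j | (vbl i ∩ vbl j).Nonempty})
    (bernWeight_nonneg hα0 hα1 univ) (fun i => by simpa using hne i) hΔ
    (fun i S hS => sum_bernWeight_inter (vbl i) (hloc i) fun u => ?_) hp hpΔ ?_
  · simp only [mem_avoid]
    refine forall₂_congr fun j hj => not_congr ?_
    have hij : Disjoint (vbl j) (vbl i) := by
      simpa [disjoint_iff_inter_eq_empty, inter_comm] using disjoint_left.1 hS hj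
    rw [hloc j u, hloc j (u \ vbl i), sdiff_inter_right_comm,
      sdiff_eq_self_of_disjoint (hij.mono_left inter_subset_right)]
  · rw [← powerset_univ, sum_bernWeight]
    exact one_pos

end Bernoulli

/-- **Existence of a good marking via the Lovász Local Lemma.**
`𝒞` is a family of constraints (indexed by `ι`) on a finite variable set `V`, each with
variable set of size exactly `k`, and each sharing a variable with at most `Δ` constraints in
total (including itself).  If `θ₁, θ_f, α ∈ (0,1)` with `θ₁ < α` and `θ_f < 1 - α` satisfy
`max(e^{-D(θ₁,α)·k}, e^{-D(θ_f,1-α)·k}) < (2eΔ)⁻¹`, then there is a subset `V₁ ⊆ V` such that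
every constraint `C` satisfies `|V₁ ∩ vbl(C)| ≥ θ₁·k` and `|vbl(C) \ V₁| ≥ θ_f·k`. -/
theorem stmt_9 {V : Type*} [Fintype V] [DecidableEq V] {ι : Type*} [Fintype ι]
    (k Δ : ℕ) (vbl : ι → Finset V)
    (hk : ∀ c, (vbl c).card = k)
    (hΔ : ∀ c : ι, ((univ : Finset ι).filter fun c' => (vbl c ∩ vbl c').Nonempty).card ≤ Δ)
    (θ₁ θf α : ℝ)
    (hθ₁ : θ₁ ∈ Set.Ioo (0 : ℝ) 1) (hθf : θf ∈ Set.Ioo (0 : ℝ) 1)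
    (hα : α ∈ Set.Ioo (0 : ℝ) 1)
    (h1 : θ₁ < α) (h2 : θf < 1 - α)
    (hLLL : max (Real.exp (-(klBern θ₁ α) * k)) (Real.exp (-(klBern θf (1 - α)) * k)) <
      (2 * Real.exp 1 * (Δ : ℝ))⁻¹) :
    ∃ V₁ : Finset V, ∀ c : ι,
      θ₁ * k ≤ ((V₁ ∩ vbl c).card : ℝ) ∧ θf * k ≤ (((vbl c) \ V₁).card : ℝ) := by
  classical
  obtain ⟨hθ₁0, -⟩ := hθ₁
  obtain ⟨hθf0, -⟩ := hθf
  obtain ⟨hα0, hα1⟩ := hα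
  rcases Nat.eq_zero_or_pos k with rfl | hk0
  · exact ⟨∅, fun c => by simp⟩
  set M := max (exp (-klBern θ₁ α * k)) (exp (-klBern θf (1 - α) * k))
  have hbad : ∀ c, ∑ u with (#(u ∩ vbl c) : ℝ) < θ₁ * k ∨ (#(vbl c \ u) : ℝ) < θf * k,
      bernWeight α univ u ≤ 2 * M := fun c => by
    have h := sum_bernWeight_card_inter_lt_or_card_sdiff_lt_le (vbl c) hθ₁0 hθf0 h1 h2
    rw [hk c] at h
    exact (h.trans (add_le_add (le_max_left _ _) (le_max_right _ _))).trans_eq (two_mul M).symm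
  have hpΔ : exp 1 * (2 * M) * Δ < 1 := by
    rcases Δ.eq_zero_or_pos with hΔ0 | hΔ0
    · simp [hΔ0]
    calc exp 1 * (2 * M) * Δ = M * (2 * exp 1 * Δ) := by ring
      _ < (2 * exp 1 * Δ)⁻¹ * (2 * exp 1 * Δ) := by gcongr
      _ = 1 := inv_mul_cancel₀ (by positivity)
  obtain ⟨V₁, hV₁⟩ := exists_forall_notMem_of_lll_bernoulli vbl
    (fun c => {u | (#(u ∩ vbl c) : ℝ) < θ₁ * k ∨ (#(vbl c \ u) : ℝ) < θf * k}) hα0.le hα1.le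
    (fun c u => by simp [inter_assoc, sdiff_inter_self_right])
    (fun c => card_pos.1 (by rw [hk c]; exact hk0)) hΔ hbad hpΔ
  exact ⟨V₁, fun c => by simpa using hV₁ c⟩
end
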